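/- arXiv:1907.04451 — 10 statements merged into one kernel-verified Lean document; each statement's English description precedes it below -/
import Mathlib

section
/- Let k ≥ 2 be an integer and let a be an integer with 1 ≤ a ≤ k−2 such that a + k − 1 is odd, and set τ = ⌊(k − a − 1)/2⌋. Then the Fourier coefficient of the presidential type predicate P at the singleton {1} satisfies P̂_{{1}} = 1 − 2^{−(k−2)} · Σ_{l=0}^{τ} C(k−1, l). -/
/-!
Pairing each `x` with its flip in the distinguished coordinate, `P(x) · x₁` contributes `2` in
total when the signed sum `S` of the other `k - 1` coordinates satisfies `-a < S ≤ a`, and `0`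
otherwise. With `m` the number of `true`s, `S = 2m - (k - 1)`, and since `k - 1 - a = 2τ + 1` is
odd this is the central band `τ < m < k - 1 - τ`. By the symmetry of binomial coefficients the
band carries weight `2^(k-1)` minus twice the tail `∑_{l ≤ τ} C(k-1, l)`.
-/

open Finset

theorem Nat.sum_Ico_choose_add_two_mul_sum_range_choose {n t : ℕ} (h : 2 * t + 1 ≤ n) :
    ∑ m ∈ Ico (t + 1) (n - t), n.choose m + 2 * ∑ l ∈ range (t + 1), n.choose l = 2 ^ n := by
  have upper_tail : ∑ m ∈ Ico (n - t) (n + 1), n.choose m = ∑ l ∈ range (t + 1), n.choose l := by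
    have := sum_Ico_reflect n.choose 0 (by omega : t + 1 ≤ n + 1)
    rw [show n + 1 - (t + 1) = n - t by omega, Nat.sub_zero, Nat.Ico_zero_eq_range] at this
    rw [← this]
    exact sum_congr rfl fun l hl => Nat.choose_symm (by simp at hl; omega)
  rw [← Nat.sum_range_choose, ← sum_range_add_sum_Ico _ (by omega : n - t ≤ n + 1), upper_tail,
    ← sum_range_add_sum_Ico _ (by omega : t + 1 ≤ n - t)]
  ring

section FunBool

variable {α : Type*} [Fintype α]

theorem Fintype.sum_fun_bool_apply_card_filter [DecidableEq α] {M : Type*} [AddCommMonoid M]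
    (f : ℕ → M) :
    ∑ y : α → Bool, f #{j | y j} = ∑ m ∈ range (card α + 1), (card α).choose m • f m := by
  rw [← card_univ, ← sum_powerset_apply_card, powerset_univ]
  refine Fintype.sum_bijective (fun y : α → Bool => ({j | y j} : Finset α))
    ⟨fun y y' h => ?_, fun s => ⟨(· ∈ s), ?_⟩⟩ _ _ fun _ => rfl
  · funext j
    simpa using congrArg (j ∈ ·) h
  · ext; simp

theorem card_central_fun_bool_add_two_mul_sum_range_choose [DecidableEq α] {t : ℕ}
    (h : 2 * t + 1 ≤ Fintype.card α) :
    #{y : α → Bool | t < #{j | y j} ∧ #{j | y j} < Fintype.card α - t}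
      + 2 * ∑ l ∈ range (t + 1), (Fintype.card α).choose l = 2 ^ Fintype.card α := by
  rw [card_filter, Fintype.sum_fun_bool_apply_card_filter
    (fun m => if t < m ∧ m < Fintype.card α - t then 1 else 0)]
  simp only [smul_eq_mul, mul_ite, mul_one, mul_zero]
  rw [← sum_filter, ← Nat.sum_Ico_choose_add_two_mul_sum_range_choose h]
  congr 2
  ext m
  simp only [mem_filter, mem_range, mem_Ico]
  omega

def signSum (y : α → Bool) : ℤ := ∑ j, if y j then 1 else -1

theorem signSum_eq (y : α → Bool) :
    signSum y = 2 * #{j | y j} - Fintype.card α := by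
  rw [signSum, card_filter, ← card_univ, card_eq_sum_ones, Nat.cast_sum, Nat.cast_sum, mul_sum,
    ← sum_sub_distrib]
  exact sum_congr rfl fun j _ => by cases y j <;> simp

theorem card_neg_lt_signSum_le_add_two_mul_sum_range_choose [DecidableEq α] {a : ℤ} {t : ℕ}
    (ha : 0 ≤ a) (hcard : (Fintype.card α : ℤ) = 2 * t + 1 + a) :
    #{y : α → Bool | -a < signSum y ∧ signSum y ≤ a}
      + 2 * ∑ l ∈ range (t + 1), (Fintype.card α).choose l = 2 ^ Fintype.card α := by
  rw [← card_central_fun_bool_add_two_mul_sum_range_choose (t := t) (by omega)]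
  congr 2
  refine filter_congr fun y _ => ?_
  rw [signSum_eq]
  omega

end FunBool

theorem sign_pos_add_sub_sign_pos {a : ℤ} (ha : 0 < a) (S : ℤ) :
    ((if 0 < a + S then 1 else -1) - if 0 < -a + S then 1 else -1 : ℝ)
      = if -a < S ∧ S ≤ a then 2 else 0 := by
  split_ifs <;> norm_num <;> omega

theorem sum_sign_majority_mul_sign_eq_two_mul_card {ι : Type*} [Fintype ι] [DecidableEq ι]
    (z : ι) {a : ℤ} (ha : 0 < a) :
    ∑ x : ι → Bool,
        (if 0 < a * (if x z then 1 else -1) + ∑ i ∈ univ.filter (· ≠ z), (if x i then 1 else -1)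
          then (1 : ℝ) else -1) * (if x z then 1 else -1)
      = 2 * #{y : {i // i ≠ z} → Bool | -a < signSum y ∧ signSum y ≤ a} := by
  have rest (x : ι → Bool) : ∑ i ∈ univ.filter (· ≠ z), (if x i then 1 else -1)
      = signSum (Equiv.funSplitAt z Bool x).2 :=
    sum_subtype _ (by simp) (fun i => if x i then (1 : ℤ) else -1)
  rw [Fintype.sum_equiv (Equiv.funSplitAt z Bool) _
    (fun p => (if 0 < a * (if p.1 then 1 else -1) + signSum p.2 then (1 : ℝ) else -1) *
      (if p.1 then 1 else -1)) fun x => by rw [rest]; rfl, Fintype.sum_prod_type_right]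
  rw [card_filter, Nat.cast_sum, mul_sum]
  refine Fintype.sum_congr _ _ fun y => ?_
  simp [← sign_pos_add_sub_sign_pos ha, sub_eq_add_neg]

/-- Coordinate `1` of the paper is index `0 : Fin k`; booleans encode `{−1,1}` by `true ↦ 1`,
`false ↦ −1`. -/
theorem stmt_0 (k : ℕ) (hk : 2 ≤ k) (a : ℤ) (ha1 : 1 ≤ a) (ha2 : a ≤ (k : ℤ) - 2)
    (hodd : Odd (a + (k : ℤ) - 1)) :
    ((2 : ℝ) ^ k)⁻¹ *
        ∑ x : Fin k → Bool,
          (if 0 < a * (if x ⟨0, by omega⟩ then (1 : ℤ) else -1) +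
                ∑ i ∈ Finset.univ.filter (fun i : Fin k => i ≠ ⟨0, by omega⟩),
                  (if x i then (1 : ℤ) else -1)
            then (1 : ℝ) else -1) *
          (if x ⟨0, by omega⟩ then (1 : ℝ) else -1) =
      1 - ((2 : ℝ) ^ (k - 2))⁻¹ *
        ∑ l ∈ Finset.range ((((k : ℤ) - a - 1).toNat) / 2 + 1), ((k - 1).choose l : ℝ) := by
  obtain ⟨n, rfl⟩ : ∃ n, k = n + 2 := ⟨k - 2, by omega⟩
  have hcard : Fintype.card {i : Fin (n + 2) // i ≠ ⟨0, by omega⟩} = n + 1 := by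
    rw [Fintype.card_subtype_compl, Fintype.card_fin, Fintype.card_unique]; rfl
  have hsplit : ((n + 1 : ℕ) : ℤ) = 2 * ((((n + 2 : ℕ) : ℤ) - a - 1).toNat / 2 : ℕ) + 1 + a := by
    obtain ⟨c, hc⟩ := hodd
    omega
  generalize (((n + 2 : ℕ) : ℤ) - a - 1).toNat / 2 = t at hsplit ⊢
  have hcount := card_neg_lt_signSum_le_add_two_mul_sum_range_choose (by omega) (hcard ▸ hsplit)
  rw [hcard] at hcount
  rw [sum_sign_majority_mul_sign_eq_two_mul_card _ (by omega), Nat.add_sub_cancel,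
    show n + 2 - 1 = n + 1 from rfl]
  have := congrArg (Nat.cast : ℕ → ℝ) hcount
  push_cast at this
  rw [pow_succ, pow_succ]
  field_simp
  linarith [pow_succ (2 : ℝ) n]
end

section
/- Let k ≥ 2 be an integer and let a be an integer with 1 ≤ a ≤ k−2 such that a + k − 1 is odd, and set τ = ⌊(k − a − 1)/2⌋. Then for every odd integer t with 1 ≤ t ≤ k−1 and every subset S ⊆ {2,…,k} with |S| = t, the Fourier coefficient of the presidential type predicate P at S satisfies P̂_S = 2^{−(k−2)} · Σ_{i=0}^{τ} Σ_{j=0}^{τ−i} (−1)^j · C(k−t−1, i) · C(t, j). -/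
open Finset

lemma sum_pm {ι : Type*} (U : Finset ι) (x : ι → Bool) :
    ∑ i ∈ U, (if x i then (1:ℤ) else -1)
    = (U.card : ℤ) - 2 * ((U.filter fun i => x i = false).card : ℤ) := by
  classical
  have : ∀ i ∈ U, (if x i then (1:ℤ) else -1)
      = 1 - 2 * (if x i = false then (1:ℤ) else 0) := by
    intro i _; cases h : x i <;> simp [h]
  rw [Finset.sum_congr rfl this, Finset.sum_sub_distrib, Finset.sum_const, ← Finset.mul_sum,
    Finset.sum_boole]
  simp

lemma prod_pm {ι : Type*} (U : Finset ι) (x : ι → Bool) :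
    ∏ i ∈ U, (if x i then (1:ℝ) else -1)
    = (-1:ℝ) ^ (U.filter fun i => x i = false).card := by
  classical
  rw [← Finset.prod_filter_mul_prod_filter_not U (fun i => x i = false)]
  have h1 : ∏ i ∈ U.filter (fun i => x i = false), (if x i then (1:ℝ) else -1)
      = (-1:ℝ) ^ (U.filter fun i => x i = false).card := by
    rw [← Finset.prod_const]
    apply Finset.prod_congr rfl
    intro i hi
    simp only [Finset.mem_filter] at hi
    simp [hi.2]
  have h2 : ∏ i ∈ U.filter (fun i => ¬ x i = false), (if x i then (1:ℝ) else -1) = 1 := by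
    apply Finset.prod_eq_one
    intro i hi
    simp only [Finset.mem_filter, Bool.not_eq_false] at hi
    simp [hi.2]
  rw [h1, h2, mul_one]


lemma sum_transfer {k : ℕ} (z : Fin k) (S T : Finset (Fin k))
    (hzS : z ∉ S) (hzT : z ∉ T) (hST : Disjoint S T)
    (hcover : ∀ i, i ≠ z → i ∈ S ∨ i ∈ T)
    (F : Bool → ℕ → ℕ → ℝ) :
    ∑ x : Fin k → Bool,
      F (x z) (S.filter fun i => x i = false).card (T.filter fun i => x i = false).card
    = ∑ b : Bool, ∑ A ∈ S.powerset, ∑ B ∈ T.powerset, F b A.card B.card := by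
  classical
  have key : ∑ x : Fin k → Bool,
      F (x z) (S.filter fun i => x i = false).card (T.filter fun i => x i = false).card
      = ∑ p ∈ (univ : Finset Bool) ×ˢ (S.powerset ×ˢ T.powerset),
          F p.1 p.2.1.card p.2.2.card := by
    apply Finset.sum_bij'
      (i := fun x _ => (x z, S.filter fun i => x i = false, T.filter fun i => x i = false))
      (j := fun p _ => fun i => if i = z then p.1 else decide (i ∉ p.2.1 ∪ p.2.2))
    · -- hi
      intro x _
      simp only [mem_product, mem_univ, mem_powerset, true_and]
      exact ⟨filter_subset _ _, filter_subset _ _⟩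
    · -- hj
      intro p _; exact Finset.mem_univ _
    · -- left inverse : j (i x) = x
      intro x _
      funext i
      by_cases hiz : i = z
      · subst hiz; simp
      · simp only [if_neg hiz]
        cases hx : x i
        · rcases hcover i hiz with h | h <;>
            simp [Finset.mem_union, Finset.mem_filter, hx, h]
        · simp [Finset.mem_union, Finset.mem_filter, hx]
    · -- right inverse
      intro p hp
      simp only [mem_product, mem_univ, mem_powerset, true_and] at hp
      obtain ⟨b, A, B⟩ := p
      obtain ⟨hA, hB⟩ := hp
      refine Prod.ext ?_ (Prod.ext ?_ ?_)
      · simp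
      · ext i
        simp only [Finset.mem_filter]
        constructor
        · rintro ⟨hiS, hfi⟩
          have hiz : i ≠ z := fun h => hzS (h ▸ hiS)
          rw [if_neg hiz, decide_eq_false_iff_not, not_not, Finset.mem_union] at hfi
          rcases hfi with h | h
          · exact h
          · exact ((Finset.disjoint_right.mp hST (hB h)) hiS).elim
        · intro hiA
          have hiS : i ∈ S := hA hiA
          have hiz : i ≠ z := fun h => hzS (h ▸ hiS)
          refine ⟨hiS, ?_⟩
          rw [if_neg hiz, decide_eq_false_iff_not, not_not, Finset.mem_union]
          exact Or.inl hiA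
      · ext i
        simp only [Finset.mem_filter]
        constructor
        · rintro ⟨hiT, hfi⟩
          have hiz : i ≠ z := fun h => hzT (h ▸ hiT)
          rw [if_neg hiz, decide_eq_false_iff_not, not_not, Finset.mem_union] at hfi
          rcases hfi with h | h
          · exact ((Finset.disjoint_left.mp hST (hA h)) hiT).elim
          · exact h
        · intro hiB
          have hiT : i ∈ T := hB hiB
          have hiz : i ≠ z := fun h => hzT (h ▸ hiT)
          refine ⟨hiT, ?_⟩
          rw [if_neg hiz, decide_eq_false_iff_not, not_not, Finset.mem_union]
          exact Or.inr hiB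
    · -- h
      intro x _; rfl
  rw [key, Finset.sum_product]
  apply Finset.sum_congr rfl
  intro b _
  rw [Finset.sum_product]


-- indicator truncation of inner range
lemma aux_reshape (t n τ : ℕ) (c : ℕ → ℕ → ℝ) (hct : ∀ j i, t < j → c j i = 0)
    (hcn : ∀ j i, n < i → c j i = 0) :
    ∑ j ∈ range (t+1), ∑ i ∈ range (n+1), (if j + i ≤ τ then (1:ℝ) else 0) * c j i
    = ∑ i ∈ range (τ+1), ∑ j ∈ range (τ - i + 1), c j i := by
  rw [Finset.sum_comm]
  -- extend i-range to max n τ + 1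
  have h1 : ∑ i ∈ range (n+1), ∑ j ∈ range (t+1), (if j + i ≤ τ then (1:ℝ) else 0) * c j i
      = ∑ i ∈ range (max n τ + 1), ∑ j ∈ range (t+1), (if j + i ≤ τ then (1:ℝ) else 0) * c j i := by
    apply Finset.sum_subset
    · intro x hx; simp only [mem_range] at *; omega
    · intro x _ hx
      simp only [mem_range, not_lt] at hx
      apply Finset.sum_eq_zero
      intro j _
      rw [hcn j x (by omega), mul_zero]
  rw [h1]
  -- truncate i-range to τ+1
  have h2 : ∑ i ∈ range (max n τ + 1), ∑ j ∈ range (t+1), (if j + i ≤ τ then (1:ℝ) else 0) * c j i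
      = ∑ i ∈ range (τ+1), ∑ j ∈ range (t+1), (if j + i ≤ τ then (1:ℝ) else 0) * c j i := by
    rw [← Finset.sum_subset (s₁ := range (τ+1))]
    · intro x hx; simp only [mem_range] at *; omega
    · intro x _ hx
      simp only [mem_range, not_lt] at hx
      apply Finset.sum_eq_zero
      intro j _
      rw [if_neg (by omega), zero_mul]
  rw [h2]
  apply Finset.sum_congr rfl
  intro i hi
  simp only [mem_range] at hi
  -- now extend/truncate j-range
  have h3 : ∑ j ∈ range (t+1), (if j + i ≤ τ then (1:ℝ) else 0) * c j i
      = ∑ j ∈ range (max t τ + 1), (if j + i ≤ τ then (1:ℝ) else 0) * c j i := by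
    apply Finset.sum_subset
    · intro x hx; simp only [mem_range] at *; omega
    · intro x _ hx
      simp only [mem_range, not_lt] at hx
      rw [hct x i (by omega), mul_zero]
  rw [h3]
  rw [← Finset.sum_subset (s₁ := range (τ - i + 1))]
  · apply Finset.sum_congr rfl
    intro j hj
    simp only [mem_range] at hj
    rw [if_pos (by omega), one_mul]
  · intro x hx; simp only [mem_range] at *; omega
  · intro x _ hx
    simp only [mem_range, not_lt] at hx
    rw [if_neg (by omega), zero_mul]

lemma arith_core (t n τ A : ℕ) (ht : Odd t) (hA : 1 ≤ A) (hk : t + n = 2*τ + 1 + A) :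
    ∑ j ∈ range (t+1), ∑ i ∈ range (n+1),
      ((if (j+i) ≤ τ + A then (1:ℝ) else -1) + (if (j+i) ≤ τ then (1:ℝ) else -1)) *
        ((-1:ℝ)^j * (t.choose j : ℝ) * (n.choose i : ℝ))
    = 4 * ∑ i ∈ range (τ+1), ∑ j ∈ range (τ - i + 1),
        (-1:ℝ)^j * (n.choose i : ℝ) * (t.choose j : ℝ) := by
  set c : ℕ → ℕ → ℝ := fun j i => (-1:ℝ)^j * (t.choose j : ℝ) * (n.choose i : ℝ) with hc
  have hct : ∀ j i, t < j → c j i = 0 := by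
    intro j i h; simp [hc, Nat.choose_eq_zero_of_lt h]
  have hcn : ∀ j i, n < i → c j i = 0 := by
    intro j i h; simp [hc, Nat.choose_eq_zero_of_lt h]
  -- decompose the sign factor
  have hG : ∀ s : ℕ, ((if s ≤ τ + A then (1:ℝ) else -1) + (if s ≤ τ then (1:ℝ) else -1))
      = 2 * (if s ≤ τ then (1:ℝ) else 0) - 2 * (if τ + A < s then (1:ℝ) else 0) := by
    intro s
    rcases le_or_gt s τ with h1 | h1 <;> rcases le_or_gt s (τ+A) with h2 | h2
    · rw [if_pos h2, if_pos h1, if_pos h1, if_neg (by omega)]; norm_num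
    · omega
    · rw [if_pos h2, if_neg (by omega), if_neg (by omega), if_neg (by omega)]; norm_num
    · rw [if_neg (by omega), if_neg (by omega), if_neg (by omega), if_pos h2]; norm_num
  have split : ∑ j ∈ range (t+1), ∑ i ∈ range (n+1),
      ((if (j+i) ≤ τ + A then (1:ℝ) else -1) + (if (j+i) ≤ τ then (1:ℝ) else -1)) * c j i
      = 2 * (∑ j ∈ range (t+1), ∑ i ∈ range (n+1), (if j + i ≤ τ then (1:ℝ) else 0) * c j i)
        - 2 * (∑ j ∈ range (t+1), ∑ i ∈ range (n+1), (if τ + A < j + i then (1:ℝ) else 0) * c j i) := by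
    rw [Finset.mul_sum, Finset.mul_sum, ← Finset.sum_sub_distrib]
    apply Finset.sum_congr rfl; intro j _
    rw [Finset.mul_sum, Finset.mul_sum, ← Finset.sum_sub_distrib]
    apply Finset.sum_congr rfl; intro i _
    rw [hG]; ring
  -- reflection: second sum equals minus the first
  have hrefl : ∑ j ∈ range (t+1), ∑ i ∈ range (n+1), (if τ + A < j + i then (1:ℝ) else 0) * c j i
      = - ∑ j ∈ range (t+1), ∑ i ∈ range (n+1), (if j + i ≤ τ then (1:ℝ) else 0) * c j i := by
    rw [← Finset.sum_range_reflect (fun j => ∑ i ∈ range (n+1), (if τ + A < j + i then (1:ℝ) else 0) * c j i) (t+1)]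
    rw [← Finset.sum_neg_distrib]
    apply Finset.sum_congr rfl
    intro j hj
    simp only [mem_range] at hj
    have hjt : j ≤ t := by omega
    rw [← Finset.sum_range_reflect (fun i => (if τ + A < (t + 1 - 1 - j) + i then (1:ℝ) else 0) * c (t+1-1-j) i) (n+1)]
    rw [← Finset.sum_neg_distrib]
    apply Finset.sum_congr rfl
    intro i hi
    simp only [mem_range] at hi
    have hin : i ≤ n := by omega
    have e1 : t + 1 - 1 - j = t - j := by omega
    have e2 : n + 1 - 1 - i = n - i := by omega
    rw [e1, e2]
    have hcond : (τ + A < (t - j) + (n - i)) ↔ (j + i ≤ τ) := by omega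
    have hcr : c (t - j) (n - i) = - c j i := by
      simp only [hc]
      rw [Nat.choose_symm hjt, Nat.choose_symm hin]
      have : (-1:ℝ)^(t-j) = -(-1:ℝ)^j := by
        have h1 : (-1:ℝ)^(t-j) * (-1:ℝ)^j = (-1:ℝ)^t := by
          rw [← pow_add]; congr 1; omega
        have h2 : (-1:ℝ)^t = -1 := Odd.neg_one_pow ht
        have h3 : ((-1:ℝ)^j) * ((-1:ℝ)^j) = 1 := by
          rw [← pow_add, Even.neg_one_pow ⟨j, rfl⟩]
        calc (-1:ℝ)^(t-j) = (-1:ℝ)^(t-j) * (((-1:ℝ)^j) * ((-1:ℝ)^j)) := by rw [h3, mul_one]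
          _ = ((-1:ℝ)^(t-j) * (-1:ℝ)^j) * (-1:ℝ)^j := by ring
          _ = -(-1:ℝ)^j := by rw [h1, h2]; ring
      rw [this]; ring
    rw [hcr]
    by_cases h : j + i ≤ τ
    · rw [if_pos (hcond.mpr h), if_pos h]; ring
    · rw [if_neg (fun hh => h (hcond.mp hh)), if_neg h]; ring
  calc ∑ j ∈ range (t+1), ∑ i ∈ range (n+1),
      ((if (j+i) ≤ τ + A then (1:ℝ) else -1) + (if (j+i) ≤ τ then (1:ℝ) else -1)) * c j i
      = 2 * (∑ j ∈ range (t+1), ∑ i ∈ range (n+1), (if j + i ≤ τ then (1:ℝ) else 0) * c j i)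
        - 2 * (∑ j ∈ range (t+1), ∑ i ∈ range (n+1), (if τ + A < j + i then (1:ℝ) else 0) * c j i) := split
    _ = 4 * (∑ j ∈ range (t+1), ∑ i ∈ range (n+1), (if j + i ≤ τ then (1:ℝ) else 0) * c j i) := by
        rw [hrefl]; ring
    _ = 4 * ∑ i ∈ range (τ+1), ∑ j ∈ range (τ - i + 1), c j i := by
        rw [aux_reshape t n τ c hct hcn]
    _ = 4 * ∑ i ∈ range (τ+1), ∑ j ∈ range (τ - i + 1),
        (-1:ℝ)^j * (n.choose i : ℝ) * (t.choose j : ℝ) := by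
        congr 1; apply Finset.sum_congr rfl; intro i _
        apply Finset.sum_congr rfl; intro j _
        simp only [hc]; ring

/-- Fourier coefficient of the presidential type predicate
`P(x) = sign(a·x₁ + x₂ + ⋯ + x_k)` at a set `S` of `t` citizens (so `0 ∉ S`),
for odd `t` with `1 ≤ t ≤ k − 1`:
`P̂_S = 2^{−(k−2)} · Σ_{i=0}^{τ} Σ_{j=0}^{τ−i} (−1)^j C(k−t−1, i) C(t, j)`,
where `τ = ⌊(k − a − 1)/2⌋`. Booleans encode `{−1,1}`: `true ↦ 1`, `false ↦ −1`. -/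
theorem stmt_1 (k : ℕ) (hk : 2 ≤ k) (a : ℤ) (ha1 : 1 ≤ a) (ha2 : a ≤ (k : ℤ) - 2)
    (hodd : Odd (a + (k : ℤ) - 1)) (t : ℕ) (ht1 : 1 ≤ t) (ht2 : t ≤ k - 1) (htodd : Odd t)
    (S : Finset (Fin k)) (hS : (⟨0, by omega⟩ : Fin k) ∉ S) (hcard : S.card = t) :
    ((2 : ℝ) ^ k)⁻¹ *
        ∑ x : Fin k → Bool,
          (if 0 < a * (if x ⟨0, by omega⟩ then (1 : ℤ) else -1) +
                ∑ i ∈ Finset.univ.filter (fun i : Fin k => i ≠ ⟨0, by omega⟩),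
                  (if x i then (1 : ℤ) else -1)
            then (1 : ℝ) else -1) *
          ∏ i ∈ S, (if x i then (1 : ℝ) else -1) =
      ((2 : ℝ) ^ (k - 2))⁻¹ *
        ∑ i ∈ Finset.range ((((k : ℤ) - a - 1).toNat) / 2 + 1),
          ∑ j ∈ Finset.range ((((k : ℤ) - a - 1).toNat) / 2 - i + 1),
            (-1 : ℝ) ^ j * ((k - t - 1).choose i : ℝ) * (t.choose j : ℝ) := by
  classical
  set z : Fin k := ⟨0, by omega⟩ with hzdef
  set τ : ℕ := (((k : ℤ) - a - 1).toNat) / 2 with hτdef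
  set A : ℕ := a.toNat with hAdef
  set n : ℕ := k - t - 1 with hndef
  have hAa : (A : ℤ) = a := Int.toNat_of_nonneg (by omega)
  have hτa : ((k : ℤ) - a - 1) = 2 * τ + 1 := by
    obtain ⟨r, hr⟩ := hodd
    omega
  have hA1 : 1 ≤ A := by omega
  have hsum : t + n = 2 * τ + 1 + A := by omega
  -- the complement set
  set T : Finset (Fin k) := (Finset.univ.erase z) \ S with hTdef
  have hzT : z ∉ T := by simp [hTdef]
  have hST : Disjoint S T := Finset.disjoint_sdiff
  have hcover : ∀ i : Fin k, i ≠ z → i ∈ S ∨ i ∈ T := by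
    intro i hiz
    by_cases h : i ∈ S
    · exact Or.inl h
    · exact Or.inr (Finset.mem_sdiff.mpr ⟨Finset.mem_erase.mpr ⟨hiz, Finset.mem_univ i⟩, h⟩)
  have hSsub : S ⊆ Finset.univ.erase z := fun i hi =>
    Finset.mem_erase.mpr ⟨fun h => hS (h ▸ hi), Finset.mem_univ i⟩
  have hTcard : T.card = n := by
    rw [hTdef, Finset.card_sdiff_of_subset hSsub, Finset.card_erase_of_mem (Finset.mem_univ z),
      Finset.card_univ, Fintype.card_fin, hcard]
    omega
  set F : Bool → ℕ → ℕ → ℝ := fun b j i =>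
    (if 0 < a * (if b then (1:ℤ) else -1) + ((t : ℤ) + (n : ℤ) - 2 * j - 2 * i)
      then (1:ℝ) else -1) * (-1:ℝ)^j with hFdef
  have step1 : ∑ x : Fin k → Bool,
      (if 0 < a * (if x z then (1 : ℤ) else -1) +
            ∑ i ∈ Finset.univ.filter (fun i : Fin k => i ≠ z),
              (if x i then (1 : ℤ) else -1)
        then (1 : ℝ) else -1) *
      ∏ i ∈ S, (if x i then (1 : ℝ) else -1)
      = ∑ x : Fin k → Bool,
          F (x z) (S.filter fun i => x i = false).card (T.filter fun i => x i = false).card := by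
    apply Finset.sum_congr rfl
    intro x _
    have hsplit : Finset.univ.filter (fun i : Fin k => i ≠ z) = S ∪ T := by
      ext i
      simp only [Finset.mem_filter, Finset.mem_univ, true_and, Finset.mem_union]
      constructor
      · exact hcover i
      · rintro (h | h)
        · exact fun hh => hS (hh ▸ h)
        · exact fun hh => hzT (hh ▸ h)
    have hsumval : ∑ i ∈ Finset.univ.filter (fun i : Fin k => i ≠ z),
        (if x i then (1 : ℤ) else -1)
        = (t : ℤ) + (n : ℤ) - 2 * ((S.filter fun i => x i = false).card : ℤ)
            - 2 * ((T.filter fun i => x i = false).card : ℤ) := by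
      rw [hsplit, Finset.sum_union hST, sum_pm S x, sum_pm T x, hcard, hTcard]
      ring
    rw [hsumval, prod_pm S x, hFdef]
  rw [step1, sum_transfer z S T hS hzT hST hcover F]
  -- expand powerset sums into binomial-weighted sums
  have step2 : ∀ b : Bool, ∑ A' ∈ S.powerset, ∑ B ∈ T.powerset, F b A'.card B.card
      = ∑ j ∈ range (t+1), (t.choose j) •
          ∑ i ∈ range (n+1), (n.choose i) • F b j i := by
    intro b
    have inner : ∀ A' : Finset (Fin k), ∑ B ∈ T.powerset, F b A'.card B.card
        = ∑ i ∈ range (n+1), (n.choose i) • F b A'.card i := by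
      intro A'
      rw [Finset.sum_powerset_apply_card (fun m => F b A'.card m), hTcard]
    rw [Finset.sum_congr rfl (fun A' _ => inner A'),
      Finset.sum_powerset_apply_card (fun m => ∑ i ∈ range (n+1), (n.choose i) • F b m i),
      hcard]
  rw [Fintype.sum_bool, step2, step2]
  -- combine the two boolean values
  have step3 : (∑ j ∈ range (t+1), (t.choose j) • ∑ i ∈ range (n+1), (n.choose i) • F true j i)
      + (∑ j ∈ range (t+1), (t.choose j) • ∑ i ∈ range (n+1), (n.choose i) • F false j i)
      = ∑ j ∈ range (t+1), ∑ i ∈ range (n+1),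
          ((if (j+i) ≤ τ + A then (1:ℝ) else -1) + (if (j+i) ≤ τ then (1:ℝ) else -1)) *
            ((-1:ℝ)^j * (t.choose j : ℝ) * (n.choose i : ℝ)) := by
    rw [← Finset.sum_add_distrib]
    apply Finset.sum_congr rfl
    intro j _
    simp only [smul_eq_mul, nsmul_eq_mul]
    rw [Finset.mul_sum, Finset.mul_sum, ← Finset.sum_add_distrib]
    apply Finset.sum_congr rfl
    intro i _
    have h1 : (0 < a * (1:ℤ) + ((t:ℤ) + (n:ℤ) - 2*j - 2*i)) ↔ (j + i ≤ τ + A) := by omega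
    have h2 : (0 < a * (-1:ℤ) + ((t:ℤ) + (n:ℤ) - 2*j - 2*i)) ↔ (j + i ≤ τ) := by omega
    simp only [hFdef, reduceIte, Bool.false_eq_true, if_false, if_true]
    rw [if_congr h1 rfl rfl]
    rw [if_congr h2 rfl rfl]
    ring
  rw [step3, arith_core t n τ A htodd hA1 hsum]
  have h2k : (2:ℝ)^k = (2:ℝ)^(k-2) * 4 := by
    have hkk : k = k - 2 + 2 := by omega
    calc (2:ℝ)^k = (2:ℝ)^(k-2+2) := by rw [← hkk]
      _ = (2:ℝ)^(k-2) * 4 := by rw [pow_add]; norm_num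
  rw [h2k, mul_inv]
  ring
end

section
/- Let k, t, u, v be positive integers with u + v = k, 1 ≤ t ≤ v and t ≤ u. Then, as an identity of rational numbers, Σ_{i=0}^{v−1} Σ_{j=0}^{v−1−i} (−1)^j · C(k−t−1, i) · C(t, j) = ((k−t−1)! / ((u−1)!·(v−1)!)) · Σ_{i=0}^{t−1} (−1)^i · C(t−1, i) · (∏_{l=1}^{i} (v−l)) · (∏_{l=1}^{t−1−i} (u−l)). -/
private lemma alt_sum (t : ℕ) (ht : 1 ≤ t) (m : ℕ) :
    ∑ j ∈ Finset.range (m + 1), (-1 : ℚ) ^ j * (t.choose j : ℚ) =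
      (-1 : ℚ) ^ m * ((t - 1).choose m : ℚ) := by
  induction m with
  | zero => simp
  | succ m ih =>
    rw [Finset.sum_range_succ, ih]
    have h : t.choose (m + 1) = (t - 1).choose m + (t - 1).choose (m + 1) := by
      conv_lhs => rw [show t = (t - 1) + 1 by omega]
      exact Nat.choose_succ_succ (t - 1) m
    rw [h]
    push_cast
    ring

private lemma prod_Icc_eq (n : ℕ) : ∀ i ≤ n,
    ∏ l ∈ Finset.Icc 1 i, (((n : ℚ) + 1) - l) =
      (n.factorial : ℚ) / ((n - i).factorial : ℚ) := by
  intro i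
  induction i with
  | zero =>
    intro _
    rw [Nat.sub_zero, Finset.Icc_eq_empty (by omega), Finset.prod_empty,
      div_self (show (n.factorial : ℚ) ≠ 0 by positivity)]
  | succ i ih =>
    intro h
    rw [Finset.prod_Icc_succ_top (by omega), ih (by omega)]
    have h1 : n - i = (n - (i + 1)) + 1 := by omega
    rw [h1, Nat.factorial_succ]
    have h2 : ((n - (i + 1) : ℕ) : ℚ) = (n : ℚ) - ((i : ℚ) + 1) := by
      rw [Nat.cast_sub h]; push_cast; ring
    have h3 : ((n - (i + 1)).factorial : ℚ) ≠ 0 := by positivity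
    have hi : (i : ℚ) < n := by exact_mod_cast (by omega : i < n)
    have h4 : (n : ℚ) - ((i : ℚ) + 1) + 1 ≠ 0 := by intro hc; nlinarith
    push_cast
    rw [h2]
    field_simp
    ring

/-- `Σ_{i=0}^{v−1} Σ_{j=0}^{v−1−i} (−1)^j C(k−t−1, i) C(t, j)
      = ((k−t−1)!/((u−1)!(v−1)!)) · Σ_{i=0}^{t−1} (−1)^i C(t−1, i)
          (∏_{l=1}^{i} (v−l)) (∏_{l=1}^{t−1−i} (u−l))` over `ℚ`,
for positive integers `k, t, u, v` with `u + v = k`, `1 ≤ t ≤ v`, `t ≤ u`. -/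
theorem stmt_6 (k t u v : ℕ) (hu : 0 < u) (hv : 0 < v) (huv : u + v = k)
    (ht1 : 1 ≤ t) (htv : t ≤ v) (htu : t ≤ u) :
    ∑ i ∈ Finset.range v, ∑ j ∈ Finset.range (v - i),
        (-1 : ℚ) ^ j * ((k - t - 1).choose i : ℚ) * (t.choose j : ℚ) =
      ((k - t - 1).factorial : ℚ) / (((u - 1).factorial : ℚ) * ((v - 1).factorial : ℚ)) *
        ∑ i ∈ Finset.range t, (-1 : ℚ) ^ i * ((t - 1).choose i : ℚ) *
          (∏ l ∈ Finset.Icc 1 i, ((v : ℚ) - l)) *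
          (∏ l ∈ Finset.Icc 1 (t - 1 - i), ((u : ℚ) - l)) := by
  -- LHS equals T := Σ_{j∈range v} (−1)^j C(t−1,j) C(k−t−1, v−1−j)
  have hLHS : ∑ i ∈ Finset.range v, ∑ j ∈ Finset.range (v - i),
        (-1 : ℚ) ^ j * ((k - t - 1).choose i : ℚ) * (t.choose j : ℚ) =
      ∑ j ∈ Finset.range v,
        (-1 : ℚ) ^ j * ((t - 1).choose j : ℚ) * ((k - t - 1).choose (v - 1 - j) : ℚ) := by
    have h1 : ∀ i ∈ Finset.range v,
        ∑ j ∈ Finset.range (v - i), (-1 : ℚ) ^ j * ((k - t - 1).choose i : ℚ) * (t.choose j : ℚ)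
          = (-1 : ℚ) ^ (v - 1 - i) * ((t - 1).choose (v - 1 - i) : ℚ)
              * ((k - t - 1).choose (v - 1 - (v - 1 - i)) : ℚ) := by
      intro i hi
      rw [Finset.mem_range] at hi
      have hvi : v - i = (v - 1 - i) + 1 := by omega
      have hii : v - 1 - (v - 1 - i) = i := by omega
      rw [hvi, hii]
      calc ∑ j ∈ Finset.range ((v - 1 - i) + 1),
            (-1 : ℚ) ^ j * ((k - t - 1).choose i : ℚ) * (t.choose j : ℚ)
          = ((k - t - 1).choose i : ℚ) *
              ∑ j ∈ Finset.range ((v - 1 - i) + 1), (-1 : ℚ) ^ j * (t.choose j : ℚ) := by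
            rw [Finset.mul_sum]; congr 1; ext j; ring
        _ = _ := by rw [alt_sum t ht1]; ring
    rw [Finset.sum_congr rfl h1]
    exact Finset.sum_range_reflect
      (fun j => (-1 : ℚ) ^ j * ((t - 1).choose j : ℚ) * ((k - t - 1).choose (v - 1 - j) : ℚ)) v
  rw [hLHS]
  -- restrict T to range t (terms with j ≥ t vanish)
  rw [show (Finset.range v) = Finset.range t ∪ (Finset.range v \ Finset.range t) by
        rw [Finset.union_sdiff_of_subset (Finset.range_subset_range.2 htv)]]
  rw [Finset.sum_union (Finset.disjoint_sdiff)]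
  have hzero : ∑ j ∈ Finset.range v \ Finset.range t,
      (-1 : ℚ) ^ j * ((t - 1).choose j : ℚ) * ((k - t - 1).choose (v - 1 - j) : ℚ) = 0 := by
    apply Finset.sum_eq_zero
    intro j hj
    simp only [Finset.mem_sdiff, Finset.mem_range] at hj
    have : (t - 1).choose j = 0 := Nat.choose_eq_zero_of_lt (by omega)
    rw [this]; push_cast; ring
  rw [hzero, add_zero, Finset.mul_sum]
  apply Finset.sum_congr rfl
  intro i hi
  rw [Finset.mem_range] at hi
  -- rewrite the products
  have hv' : (v : ℚ) = ((v - 1 : ℕ) : ℚ) + 1 := by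
    rw [Nat.cast_sub hv]; push_cast; ring
  have hu' : (u : ℚ) = ((u - 1 : ℕ) : ℚ) + 1 := by
    rw [Nat.cast_sub hu]; push_cast; ring
  have hp1 : ∏ l ∈ Finset.Icc 1 i, ((v : ℚ) - l) =
      ((v - 1).factorial : ℚ) / ((v - 1 - i).factorial : ℚ) := by
    rw [show (∏ l ∈ Finset.Icc 1 i, ((v : ℚ) - l)) =
          ∏ l ∈ Finset.Icc 1 i, (((v - 1 : ℕ) : ℚ) + 1 - l) by
        apply Finset.prod_congr rfl; intro l _; rw [← hv']]
    exact prod_Icc_eq (v - 1) i (by omega)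
  have hp2 : ∏ l ∈ Finset.Icc 1 (t - 1 - i), ((u : ℚ) - l) =
      ((u - 1).factorial : ℚ) / ((u - 1 - (t - 1 - i)).factorial : ℚ) := by
    rw [show (∏ l ∈ Finset.Icc 1 (t - 1 - i), ((u : ℚ) - l)) =
          ∏ l ∈ Finset.Icc 1 (t - 1 - i), (((u - 1 : ℕ) : ℚ) + 1 - l) by
        apply Finset.prod_congr rfl; intro l _; rw [← hu']]
    exact prod_Icc_eq (u - 1) (t - 1 - i) (by omega)
  have hch : ((k - t - 1).choose (v - 1 - i) : ℚ) =
      ((k - t - 1).factorial : ℚ) /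
        (((v - 1 - i).factorial : ℚ) * (((k - t - 1) - (v - 1 - i)).factorial : ℚ)) := by
    exact_mod_cast Nat.cast_choose ℚ (show v - 1 - i ≤ k - t - 1 by omega)
  have heq : (k - t - 1) - (v - 1 - i) = u - 1 - (t - 1 - i) := by omega
  rw [hp1, hp2, hch, heq]
  have n1 : ((u - 1).factorial : ℚ) ≠ 0 := by positivity
  have n2 : ((v - 1).factorial : ℚ) ≠ 0 := by positivity
  have n3 : ((v - 1 - i).factorial : ℚ) ≠ 0 := by positivity
  have n4 : ((u - 1 - (t - 1 - i)).factorial : ℚ) ≠ 0 := by positivity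
  field_simp
end

section
/- For every δ₀ ∈ (0,1) there exists k₀ ∈ ℕ such that the following holds: for every integer k ≥ k₀ and every real δ with δ₀ ≤ δ ≤ 1 − 2/k such that δ·k is an integer and δ·k + k − 1 is odd, and for every x ∈ {−1,1}^k satisfying δk·x₁ + Σ_{i=2}^k x_i ≥ 1, one has δk·x₁ + Σ_{i=2}^k x_i ≥ ((δ²k − 1)/4)·|Δ| + 1/2, where E = δ²k²/2 − k/2 + 1 and Δ = (Σ_{2≤i<j≤k} x_i·x_j − E)/E. -/
set_option maxHeartbeats 800000

lemma sq_sum_Icc_aux (k : ℕ) (x : ℕ → ℝ) (h : ∀ i ∈ Finset.Icc 2 k, x i = 1 ∨ x i = -1) :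
    (∑ i ∈ Finset.Icc 2 k, x i) ^ 2 =
      ((Finset.Icc 2 k).card : ℝ) +
        2 * ∑ i ∈ Finset.Icc 2 k, ∑ j ∈ Finset.Icc (i + 1) k, x i * x j := by
  induction k with
  | zero => simp
  | succ k ih =>
    rcases Nat.lt_or_ge k 1 with hk | hk
    · interval_cases k <;> simp
    have hins : Finset.Icc 2 (k + 1) = insert (k + 1) (Finset.Icc 2 k) :=
      (Finset.insert_Icc_right_eq_Icc_add_one (by omega)).symm
    have hnot : (k + 1) ∉ Finset.Icc 2 k := by simp
    have hsub : ∀ i ∈ Finset.Icc 2 k, x i = 1 ∨ x i = -1 := by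
      intro i hi
      exact h i (by rw [hins]; exact Finset.mem_insert_of_mem hi)
    have hxk : x (k + 1) = 1 ∨ x (k + 1) = -1 := h (k + 1) (by simp; omega)
    have hxk2 : x (k + 1) ^ 2 = 1 := by rcases hxk with h' | h' <;> rw [h'] <;> ring
    have hP : ∀ i ∈ Finset.Icc 2 k,
        (∑ j ∈ Finset.Icc (i + 1) (k + 1), x i * x j)
          = x i * x (k + 1) + ∑ j ∈ Finset.Icc (i + 1) k, x i * x j := by
      intro i hi
      rw [Finset.mem_Icc] at hi
      rw [← Finset.insert_Icc_right_eq_Icc_add_one (by omega : i + 1 ≤ k + 1),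
        Finset.sum_insert (by simp)]
    have hemp : Finset.Icc (k + 1 + 1) (k + 1) = ∅ := by
      apply Finset.Icc_eq_empty; omega
    rw [hins, Finset.sum_insert hnot, Finset.sum_insert hnot, Finset.card_insert_of_notMem hnot,
      Finset.sum_congr rfl hP, Finset.sum_add_distrib, ← Finset.sum_mul, hemp,
      Finset.sum_empty]
    push_cast
    linear_combination ih hsub + hxk2

lemma final_ineq (k d A t : ℝ) (hk : 3 ≤ k) (hA0 : 0 ≤ A) (hA : A ≤ t * (2 * k - 3) + 1)
    (ht : 1 ≤ t) (hd : (0:ℝ) ≤ d ^ 2 - k) :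
    (d ^ 2 / k - 1) / 4 * (A / (d ^ 2 - k + 2)) + 1 / 2 ≤ t := by
  have hkpos : (0:ℝ) < k := by linarith
  have hden : (0:ℝ) < d ^ 2 - k + 2 := by linarith
  have e1 : d ^ 2 / k - 1 = (d ^ 2 - k) / k := by field_simp
  have h1 : (d ^ 2 / k - 1) / 4 * (A / (d ^ 2 - k + 2))
      = (d ^ 2 - k) * A / (k * 4 * (d ^ 2 - k + 2)) := by
    rw [e1, div_div, div_mul_div_comm]
  have h2 : (d ^ 2 - k) * A / (k * 4 * (d ^ 2 - k + 2)) ≤ A / (4 * k) := by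
    rw [div_le_div_iff₀ (by positivity) (by positivity)]
    nlinarith
  have h3 : A / (4 * k) ≤ t - 1 / 2 := by
    rw [div_le_iff₀ (by positivity)]
    nlinarith [mul_nonneg (by linarith : (0:ℝ) ≤ t - 1) (by linarith : (0:ℝ) ≤ k)]
  rw [h1]
  linarith

/-- For every `δ₀ ∈ (0,1)` there is `k₀` such that for all `k ≥ k₀` and real
`δ₀ ≤ δ ≤ 1 − 2/k` with `δk` an integer and `δk + k − 1` odd, every satisfying
assignment `x ∈ {−1,1}^k` (indices `1,…,k`, president `x 1`) of the presidential
type predicate satisfies `δk·x₁ + Σ_{i=2}^k x_i ≥ ((δ²k − 1)/4)·|Δ| + 1/2`,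
where `E = δ²k²/2 − k/2 + 1` and `Δ = (Σ_{2≤i<j≤k} x_i x_j − E)/E`. -/
theorem stmt_9 (δ₀ : ℝ) (h0 : 0 < δ₀) (h1 : δ₀ < 1) :
    ∃ k₀ : ℕ, ∀ k : ℕ, k₀ ≤ k → ∀ δ : ℝ, δ₀ ≤ δ → δ ≤ 1 - 2 / (k : ℝ) →
      (∃ m : ℤ, δ * k = m ∧ Odd (m + (k : ℤ) - 1)) →
      ∀ x : ℕ → ℝ, (∀ i ∈ Finset.Icc 1 k, x i = 1 ∨ x i = -1) →
        1 ≤ δ * k * x 1 + ∑ i ∈ Finset.Icc 2 k, x i →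
        ∀ E Δ : ℝ, E = δ ^ 2 * k ^ 2 / 2 - k / 2 + 1 →
          Δ = ((∑ i ∈ Finset.Icc 2 k, ∑ j ∈ Finset.Icc (i + 1) k, x i * x j) - E) / E →
          (δ ^ 2 * k - 1) / 4 * |Δ| + 1 / 2 ≤ δ * k * x 1 + ∑ i ∈ Finset.Icc 2 k, x i := by
  refine ⟨⌈δ₀⁻¹ ^ 2⌉₊ + 3, ?_⟩
  intro k hk δ hδ0 hδ1 _ x hx hsat E Δ hE hΔ
  have hk3 : 3 ≤ k := by omega
  have hkR : (3:ℝ) ≤ (k:ℝ) := by exact_mod_cast hk3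
  have hkpos : (0:ℝ) < k := by linarith
  have hkc : (⌈δ₀⁻¹ ^ 2⌉₊ : ℝ) ≤ (k:ℝ) := by exact_mod_cast le_trans (by omega) hk
  have hδ0k : (1:ℝ) ≤ δ₀ ^ 2 * k := by
    have h' : δ₀⁻¹ ^ 2 ≤ (k:ℝ) := le_trans (Nat.le_ceil _) hkc
    have hp : (0:ℝ) < δ₀ ^ 2 := by positivity
    rw [inv_pow] at h'
    calc (1:ℝ) = δ₀ ^ 2 * (δ₀ ^ 2)⁻¹ := by field_simp
    _ ≤ δ₀ ^ 2 * k := mul_le_mul_of_nonneg_left h' hp.le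
  set d : ℝ := δ * k with hd_def
  have hδpos : 0 < δ := lt_of_lt_of_le h0 hδ0
  have hdpos : 0 < d := by positivity
  have hd2k : (k:ℝ) ≤ d ^ 2 := by
    have hsq2 : δ₀ ^ 2 ≤ δ ^ 2 := pow_le_pow_left₀ h0.le hδ0 2
    have h' : δ₀ ^ 2 * k ^ 2 ≤ d ^ 2 := by
      rw [hd_def, mul_pow]
      exact mul_le_mul_of_nonneg_right hsq2 (by positivity)
    nlinarith [hδ0k, hkpos]
  have hdk2 : d ≤ (k:ℝ) - 2 := by
    have h' : δ * k ≤ (1 - 2 / k) * k := mul_le_mul_of_nonneg_right hδ1 hkpos.le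
    have h'' : (1 - 2 / (k:ℝ)) * k = k - 2 := by field_simp
    rw [hd_def]
    linarith [h'' ▸ h']
  set S : ℝ := ∑ i ∈ Finset.Icc 2 k, x i with hS_def
  set t : ℝ := δ * k * x 1 + S with ht_def
  have ht : 1 ≤ t := hsat
  have hcardn : (Finset.Icc 2 k).card = k - 1 := by rw [Nat.card_Icc]; omega
  have hcard : ((Finset.Icc 2 k).card : ℝ) = (k:ℝ) - 1 := by
    rw [hcardn, Nat.cast_sub (by omega), Nat.cast_one]
  have hxsub : ∀ i ∈ Finset.Icc 2 k, x i = 1 ∨ x i = -1 := by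
    intro i hi
    rw [Finset.mem_Icc] at hi
    exact hx i (by rw [Finset.mem_Icc]; omega)
  have hsq := sq_sum_Icc_aux k x hxsub
  rw [hcard, ← hS_def] at hsq
  set P : ℝ := ∑ i ∈ Finset.Icc 2 k, ∑ j ∈ Finset.Icc (i + 1) k, x i * x j with hP_def
  have hE' : E = (d ^ 2 - k + 2) / 2 := by rw [hE, hd_def]; ring
  have hEpos : 0 < E := by rw [hE']; linarith
  have hdenpos : (0:ℝ) < d ^ 2 - k + 2 := by linarith
  have habsS : |S| ≤ (k:ℝ) - 1 := by
    calc |S| ≤ ∑ i ∈ Finset.Icc 2 k, |x i| := Finset.abs_sum_le_sum_abs _ _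
    _ = ∑ i ∈ Finset.Icc 2 k, (1:ℝ) := by
        apply Finset.sum_congr rfl
        intro i hi
        rcases hxsub i hi with h' | h' <;> rw [h'] <;> norm_num
    _ = ((Finset.Icc 2 k).card : ℝ) := by rw [Finset.sum_const]; simp
    _ = (k:ℝ) - 1 := hcard
  have hx1 : x 1 = 1 ∨ x 1 = -1 := hx 1 (by rw [Finset.mem_Icc]; omega)
  have hx1sq : x 1 ^ 2 = 1 := by rcases hx1 with h' | h' <;> rw [h'] <;> ring
  have habsx1 : |x 1| = 1 := by rcases hx1 with h' | h' <;> rw [h'] <;> norm_num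
  have h2P : P = (S ^ 2 - ((k:ℝ) - 1)) / 2 := by linarith
  have hΔ' : Δ = (S ^ 2 - d ^ 2 - 1) / (d ^ 2 - k + 2) := by
    rw [hΔ, hE', h2P]
    have hne : (d ^ 2 - (k:ℝ) + 2) ≠ 0 := ne_of_gt hdenpos
    field_simp
    ring
  have hAbsΔ : |Δ| = |S ^ 2 - d ^ 2 - 1| / (d ^ 2 - k + 2) := by
    rw [hΔ', abs_div, abs_of_pos hdenpos]
  have hkey : |S ^ 2 - d ^ 2 - 1| ≤ t * (2 * k - 3) + 1 := by
    have hid : S ^ 2 - d ^ 2 = t * (S - d * x 1) := by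
      rw [ht_def, ← hd_def]
      nlinarith [hx1sq]
    have habs2 : |S - d * x 1| ≤ 2 * k - 3 := by
      have hdx : |d * x 1| = d := by rw [abs_mul, habsx1, abs_of_pos hdpos]; ring
      calc |S - d * x 1| ≤ |S| + |d * x 1| := abs_sub _ _
      _ = |S| + d := by rw [hdx]
      _ ≤ ((k:ℝ) - 1) + ((k:ℝ) - 2) := by linarith
      _ = 2 * k - 3 := by ring
    calc |S ^ 2 - d ^ 2 - 1| ≤ |S ^ 2 - d ^ 2| + 1 := by
          have := abs_sub (S ^ 2 - d ^ 2) (1:ℝ)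
          simpa using this
    _ = |t| * |S - d * x 1| + 1 := by rw [hid, abs_mul]
    _ ≤ t * (2 * k - 3) + 1 := by
        have ht0 : |t| = t := abs_of_pos (by linarith)
        rw [ht0]
        have hm : t * |S - d * x 1| ≤ t * (2 * k - 3) :=
          mul_le_mul_of_nonneg_left habs2 (by linarith)
        linarith
  have hfin := final_ineq (k:ℝ) d |S ^ 2 - d ^ 2 - 1| t hkR (abs_nonneg _) hkey ht
    (by linarith)
  have hδ2k : δ ^ 2 * (k:ℝ) = d ^ 2 / k := by
    rw [hd_def, mul_pow]; field_simp
  rw [hAbsΔ, hδ2k]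
  exact hfin
end

section
/- For every δ₀ ∈ (0,1) there exists k₀ ∈ ℕ such that the following holds: for every integer k ≥ k₀ and every real δ with δ₀ ≤ δ ≤ 1 − 2/k such that δ·k is an integer and δ·k + k − 1 is odd, and for every point (b, c) ∈ ℝ^k × ℝ^{{(i,j) : 1≤i<j≤k}} lying in the convex hull of the set { (x, (x_i·x_j)_{1≤i<j≤k}) : x ∈ {−1,1}^k, δk·x₁ + Σ_{i=2}^k x_i ≥ 1 }, one has δk·b₁ + Σ_{i=2}^k b_i ≥ ((δ²k − 1)/4)·|Δ| + 1/2, where E = δ²k²/2 − k/2 + 1 and Δ = (Σ_{2≤i<j≤k} c_{ij} − E)/E. -/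
open Finset

/-!
For `k ≥ 1/δ₀²` the coefficient `(δ²k − 1)/4` is nonnegative, so the left-hand side is a convex
function of `(b, c)` (a multiple of the absolute value of an affine function) while the right-hand
side is linear; hence it suffices to check the inequality at the vertices `(x, (x_i x_j))`.
There, with `m = δk`, `s = x₁` and `t = Σ_{i ≥ 2} x_i`, the pairwise sum is `(t² − (k − 1))/2`, so
`Δ = (t² − m² − 1)/(m² − k + 2)`. Writing `t² − m² − 1 = (t − ms)(ms + t) − 1` with `ms + t ≥ 1`
and `|t − ms| ≤ 2k − 1` bounds `|t² − m² − 1|` by `2k(2(ms + t) − 1)`, which is exactly what is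
needed since `(m² − k)/(m² − k + 2) ≤ 1`.
-/

theorem sq_sum_Icc {R : Type*} [CommRing R] (x : ℕ → R) (a n : ℕ) :
    (∑ i ∈ Icc a n, x i) ^ 2 =
      ∑ i ∈ Icc a n, x i ^ 2 + 2 * ∑ i ∈ Icc a n, ∑ j ∈ Icc (i + 1) n, x i * x j := by
  induction n with
  | zero => rcases Nat.eq_zero_or_pos a with rfl | ha <;> simp [*]
  | succ n ih =>
    rcases le_or_gt a (n + 1) with ha | ha
    · have hinner : ∀ i ∈ Icc a n, ∑ j ∈ Icc (i + 1) (n + 1), x i * x j =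
          ∑ j ∈ Icc (i + 1) n, x i * x j + x i * x (n + 1) := fun i hi =>
        sum_Icc_succ_top (by simp at hi; omega) _
      rw [sum_Icc_succ_top ha, sum_Icc_succ_top ha, sum_Icc_succ_top ha, sum_congr rfl hinner,
        sum_add_distrib, ← sum_mul, Icc_eq_empty_of_lt (lt_add_one (n + 1)), sum_empty]
      linear_combination ih
    · simp [Icc_eq_empty_of_lt ha]

theorem sum_Icc_pairs_of_sq_eq_one {x : ℕ → ℝ} {a n : ℕ} (hx : ∀ i ∈ Icc a n, x i ^ 2 = 1) :
    ∑ i ∈ Icc a n, ∑ j ∈ Icc (i + 1) n, x i * x j =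
      ((∑ i ∈ Icc a n, x i) ^ 2 - #(Icc a n)) / 2 := by
  rw [sq_sum_Icc, sum_congr rfl hx, sum_const, nsmul_one]
  ring

theorem abs_sum_le_card_of_abs_eq_one {ι : Type*} {s : Finset ι} {x : ι → ℝ}
    (hx : ∀ i ∈ s, |x i| = 1) : |∑ i ∈ s, x i| ≤ #s := by
  refine (abs_sum_le_sum_abs _ _).trans_eq ?_
  rw [sum_congr rfl hx, sum_const, nsmul_one]

theorem abs_sq_sub_sq_sub_one_le {k m s t : ℝ} (hs : s ^ 2 = 1) (hmt : |t| + |m| ≤ 2 * k - 1)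
    (hv : 1 ≤ m * s + t) : |t ^ 2 - m ^ 2 - 1| ≤ 2 * k * (2 * (m * s + t) - 1) := by
  have hs' : |s| = 1 := by rcases sq_eq_one_iff.mp hs with rfl | rfl <;> simp
  have hu : |t - m * s| ≤ 2 * k - 1 := by
    calc |t - m * s| ≤ |t| + |m * s| := abs_sub _ _
      _ = |t| + |m| := by rw [abs_mul, hs', mul_one]
      _ ≤ 2 * k - 1 := hmt
  have hfactor : t ^ 2 - m ^ 2 - 1 = (t - m * s) * (m * s + t) - 1 := by
    linear_combination m ^ 2 * hs
  calc |t ^ 2 - m ^ 2 - 1| ≤ |t - m * s| * (m * s + t) + 1 := by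
        rw [hfactor]
        refine (abs_sub _ _).trans ?_
        rw [abs_mul, abs_of_pos (by linarith : 0 < m * s + t), abs_one]
    _ ≤ (2 * k - 1) * (m * s + t) + 1 := by gcongr
    _ ≤ 2 * k * (2 * (m * s + t) - 1) := by nlinarith [abs_nonneg t, abs_nonneg m]

theorem presidential_vertex_ineq_of_sum {δ k s t : ℝ} (hδk : 1 ≤ δ ^ 2 * k) (hs : s ^ 2 = 1)
    (hmt : |t| + |δ * k| ≤ 2 * k - 1) (hv : 1 ≤ δ * k * s + t) :
    (δ ^ 2 * k - 1) / 4 *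
        |((t ^ 2 - (k - 1)) / 2 - (δ ^ 2 * k ^ 2 / 2 - k / 2 + 1)) /
          (δ ^ 2 * k ^ 2 / 2 - k / 2 + 1)| + 1 / 2 ≤ δ * k * s + t := by
  set m := δ * k
  have hk : 0 < k := by linarith [abs_nonneg t, abs_nonneg m]
  have hmk : k ≤ m ^ 2 := by nlinarith
  have hΔ : ((t ^ 2 - (k - 1)) / 2 - (δ ^ 2 * k ^ 2 / 2 - k / 2 + 1)) /
      (δ ^ 2 * k ^ 2 / 2 - k / 2 + 1) = (t ^ 2 - m ^ 2 - 1) / (m ^ 2 - k + 2) := by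
    field_simp
    ring
  have hα : (δ ^ 2 * k - 1) / 4 = (m ^ 2 - k) / (4 * k) := by
    field_simp
    ring
  have hratio : (m ^ 2 - k) / (m ^ 2 - k + 2) ≤ 1 := by
    rw [div_le_one (by linarith)]; linarith
  have hD := abs_sq_sub_sq_sub_one_le hs hmt hv
  rw [hΔ, hα, abs_div, abs_of_pos (by linarith : 0 < m ^ 2 - k + 2)]
  calc (m ^ 2 - k) / (4 * k) * (|t ^ 2 - m ^ 2 - 1| / (m ^ 2 - k + 2)) + 1 / 2
      = (m ^ 2 - k) / (m ^ 2 - k + 2) * (|t ^ 2 - m ^ 2 - 1| / (4 * k)) + 1 / 2 := by ring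
    _ ≤ 1 * (2 * k * (2 * (m * s + t) - 1) / (4 * k)) + 1 / 2 := by gcongr
    _ = m * s + t := by field_simp; ring

theorem convex_setOf_mul_abs_le {V : Type*} [AddCommGroup V] [Module ℝ V]
    (f g : V →ᵃ[ℝ] ℝ) {α : ℝ} (hα : 0 ≤ α) : Convex ℝ {p | α * |g p| ≤ f p} := by
  intro p hp q hq a b ha hb hab
  simp only [Set.mem_ofPred_eq, Convex.combo_affine_apply hab, smul_eq_mul] at *
  calc α * |a * g p + b * g q| ≤ α * (a * |g p| + b * |g q|) := by
        gcongr
        refine (abs_add_le _ _).trans_eq ?_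
        rw [abs_mul, abs_mul, abs_of_nonneg ha, abs_of_nonneg hb]
    _ = a * (α * |g p|) + b * (α * |g q|) := by ring
    _ ≤ a * f p + b * f q := by gcongr

theorem convex_setOf_presidential_ineq (k : ℕ) (w E α : ℝ) (hα : 0 ≤ α) :
    Convex ℝ {p : (ℕ → ℝ) × (ℕ → ℕ → ℝ) |
      α * |((∑ i ∈ Icc 2 k, ∑ j ∈ Icc (i + 1) k, p.2 i j) - E) / E| + 1 / 2 ≤
        w * p.1 1 + ∑ i ∈ Icc 2 k, p.1 i} := by
  let bias : (ℕ → ℝ) × (ℕ → ℕ → ℝ) →ₗ[ℝ] ℝ :=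
    w • (LinearMap.proj 1 ∘ₗ LinearMap.fst ℝ _ _) +
      ∑ i ∈ Icc 2 k, LinearMap.proj i ∘ₗ LinearMap.fst ℝ _ _
  let pairBias : (ℕ → ℝ) × (ℕ → ℕ → ℝ) →ₗ[ℝ] ℝ :=
    ∑ i ∈ Icc 2 k, ∑ j ∈ Icc (i + 1) k, LinearMap.proj j ∘ₗ LinearMap.proj i ∘ₗ LinearMap.snd ℝ _ _
  let f : (ℕ → ℝ) × (ℕ → ℕ → ℝ) →ᵃ[ℝ] ℝ := bias.toAffineMap - AffineMap.const ℝ _ (1 / 2)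
  let g : (ℕ → ℝ) × (ℕ → ℕ → ℝ) →ᵃ[ℝ] ℝ := E⁻¹ • (pairBias.toAffineMap - AffineMap.const ℝ _ E)
  have hset : {p : (ℕ → ℝ) × (ℕ → ℕ → ℝ) |
      α * |((∑ i ∈ Icc 2 k, ∑ j ∈ Icc (i + 1) k, p.2 i j) - E) / E| + 1 / 2 ≤
        w * p.1 1 + ∑ i ∈ Icc 2 k, p.1 i} = {p | α * |g p| ≤ f p} := by
    ext p
    simp [f, g, bias, pairBias, div_eq_inv_mul, le_sub_iff_add_le]
  rw [hset]
  exact convex_setOf_mul_abs_le f g hα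

theorem presidential_vertex_ineq {k : ℕ} (hk : 1 ≤ k) {δ : ℝ} (hδk : 1 ≤ δ ^ 2 * k)
    (hδ : |δ * k| ≤ k) {x : ℕ → ℝ} (hx : ∀ i, x i = 1 ∨ x i = -1)
    (hsat : 1 ≤ δ * k * x 1 + ∑ i ∈ Icc 2 k, x i) :
    (δ ^ 2 * k - 1) / 4 *
        |((∑ i ∈ Icc 2 k, ∑ j ∈ Icc (i + 1) k, x i * x j) - (δ ^ 2 * k ^ 2 / 2 - k / 2 + 1)) /
          (δ ^ 2 * k ^ 2 / 2 - k / 2 + 1)| + 1 / 2 ≤ δ * k * x 1 + ∑ i ∈ Icc 2 k, x i := by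
  have hsq : ∀ i, x i ^ 2 = 1 := fun i => sq_eq_one_iff.mpr (hx i)
  have habs : ∀ i, |x i| = 1 := fun i => by rcases hx i with h | h <;> simp [h]
  have hcard : (#(Icc 2 k) : ℝ) = k - 1 := by
    rw [Nat.card_Icc, Nat.cast_sub (by omega)]
    push_cast
    ring
  have ht : |∑ i ∈ Icc 2 k, x i| ≤ k - 1 :=
    hcard ▸ abs_sum_le_card_of_abs_eq_one fun i _ => habs i
  rw [sum_Icc_pairs_of_sq_eq_one fun i _ => hsq i, hcard]
  exact presidential_vertex_ineq_of_sum hδk (hsq 1) (by linarith) hsat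

theorem stmt_10_general (δ₀ : ℝ) (h0 : 0 < δ₀) :
    ∃ k₀ : ℕ, ∀ k : ℕ, k₀ ≤ k → ∀ δ : ℝ, δ₀ ≤ δ → δ ≤ 1 - 2 / (k : ℝ) →
      (∃ m : ℤ, δ * k = m ∧ Odd (m + (k : ℤ) - 1)) →
      ∀ b : ℕ → ℝ, ∀ c : ℕ → ℕ → ℝ,
        (b, c) ∈ convexHull ℝ { p : (ℕ → ℝ) × (ℕ → ℕ → ℝ) |
          ∃ x : ℕ → ℝ, (∀ i, x i = 1 ∨ x i = -1) ∧
            1 ≤ δ * k * x 1 + ∑ i ∈ Finset.Icc 2 k, x i ∧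
            p = (x, fun i j => x i * x j) } →
        ∀ E Δ : ℝ, E = δ ^ 2 * k ^ 2 / 2 - k / 2 + 1 →
          Δ = ((∑ i ∈ Finset.Icc 2 k, ∑ j ∈ Finset.Icc (i + 1) k, c i j) - E) / E →
          (δ ^ 2 * k - 1) / 4 * |Δ| + 1 / 2 ≤ δ * k * b 1 + ∑ i ∈ Finset.Icc 2 k, b i := by
  refine ⟨⌈1 / δ₀ ^ 2⌉₊, fun k hk δ hδ₀ hδ _ b c hbc E Δ hE hΔ => ?_⟩
  have hkδ₀ : 1 ≤ δ₀ ^ 2 * k := by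
    rw [← div_le_iff₀' (by positivity)]
    exact Nat.ceil_le.mp hk
  have hk : 0 < (k : ℝ) := pos_of_mul_pos_right (one_pos.trans_le hkδ₀) (sq_nonneg δ₀)
  have hδk : 1 ≤ δ ^ 2 * k := hkδ₀.trans (by gcongr)
  have hδ1 : |δ * k| ≤ k := by
    have hδle : δ ≤ 1 := hδ.trans (by linarith [div_nonneg zero_le_two hk.le])
    rw [abs_of_nonneg (mul_nonneg (h0.le.trans hδ₀) hk.le)]
    exact mul_le_of_le_one_left hk.le hδle
  subst hE hΔ
  have hconv := convex_setOf_presidential_ineq k (δ * k) (δ ^ 2 * k ^ 2 / 2 - k / 2 + 1)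
    ((δ ^ 2 * k - 1) / 4) (by linarith)
  refine (convexHull_min ?_ hconv hbc :)
  rintro _ ⟨x, hx, hsat, rfl⟩
  exact presidential_vertex_ineq (Nat.cast_pos.mp hk) hδk hδ1 hx hsat

/-- For every `δ₀ ∈ (0,1)` there is `k₀` such that for all `k ≥ k₀` and real
`δ₀ ≤ δ ≤ 1 − 2/k` with `δk` an integer and `δk + k − 1` odd, every point
`(b, c)` of the KTW polytope — the convex hull of the points
`(x, (x_i x_j)_{i,j})` over satisfying assignments `x ∈ {−1,1}^k` of the
presidential type predicate (indices `1,…,k`, president `x 1`) — satisfies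
`δk·b₁ + Σ_{i=2}^k b_i ≥ ((δ²k − 1)/4)·|Δ| + 1/2`, where
`E = δ²k²/2 − k/2 + 1` and `Δ = (Σ_{2≤i<j≤k} c_{ij} − E)/E`. -/
theorem stmt_10 (δ₀ : ℝ) (h0 : 0 < δ₀) (h1 : δ₀ < 1) :
    ∃ k₀ : ℕ, ∀ k : ℕ, k₀ ≤ k → ∀ δ : ℝ, δ₀ ≤ δ → δ ≤ 1 - 2 / (k : ℝ) →
      (∃ m : ℤ, δ * k = m ∧ Odd (m + (k : ℤ) - 1)) →
      ∀ b : ℕ → ℝ, ∀ c : ℕ → ℕ → ℝ,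
        (b, c) ∈ convexHull ℝ { p : (ℕ → ℝ) × (ℕ → ℕ → ℝ) |
          ∃ x : ℕ → ℝ, (∀ i, x i = 1 ∨ x i = -1) ∧
            1 ≤ δ * k * x 1 + ∑ i ∈ Finset.Icc 2 k, x i ∧
            p = (x, fun i j => x i * x j) } →
        ∀ E Δ : ℝ, E = δ ^ 2 * k ^ 2 / 2 - k / 2 + 1 →
          Δ = ((∑ i ∈ Finset.Icc 2 k, ∑ j ∈ Finset.Icc (i + 1) k, c i j) - E) / E →
          (δ ^ 2 * k - 1) / 4 * |Δ| + 1 / 2 ≤ δ * k * b 1 + ∑ i ∈ Finset.Icc 2 k, b i :=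
  stmt_10_general δ₀ h0
end

section
/- Let k ≥ 2 be an integer and let a be a positive integer with a + k − 1 odd. Then every x ∈ {−1,1}^k with x₁ = −1 and a·x₁ + Σ_{i=2}^k x_i ≥ 1 satisfies 2·Σ_{2≤i<j≤k} x_i·x_j ≥ a² + 2a − k + 2. (In particular, writing a = δk and E = δ²k²/2 − k/2 + 1, every satisfying assignment with x₁ = −1 has Σ_{2≤i<j≤k} x_i·x_j ≥ E + a, i.e. Δ ≥ 0 when E > 0.) -/
/-! With `S = Σ_{i ≥ 2} x_i`, expanding the square gives `S² = (k - 1) + 2 Σ_{2 ≤ i < j ≤ k} x_i x_j`,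
and `x₁ = -1` turns the constraint into `S ≥ a + 1`, so `S² ≥ (a + 1)²`. -/

open Finset

theorem sq_sum_Icc_eq {R : Type*} [CommSemiring R] (f : ℕ → R) (m n : ℕ) :
    (∑ i ∈ Icc m n, f i) ^ 2 =
      ∑ i ∈ Icc m n, f i ^ 2 + 2 * ∑ i ∈ Icc m n, ∑ j ∈ Icc (i + 1) n, f i * f j := by
  induction n with
  | zero => rcases m with _ | m <;> simp [sq]
  | succ n ih =>
    rcases lt_or_ge (n + 1) m with hlt | hle
    · simp [Icc_eq_empty_of_lt hlt]
    have hinner : ∀ i ∈ Icc m n, ∑ j ∈ Icc (i + 1) (n + 1), f i * f j =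
        ∑ j ∈ Icc (i + 1) n, f i * f j + f i * f (n + 1) := fun i hi =>
      sum_Icc_succ_top (by simp only [mem_Icc] at hi; omega) _
    rw [sum_Icc_succ_top hle, sum_Icc_succ_top hle, sum_Icc_succ_top hle, sum_congr rfl hinner,
      sum_add_distrib, Icc_eq_empty_of_lt (Nat.lt_succ_self _), sum_empty, ← sum_mul, add_sq, ih]
    ring

theorem sum_sq_eq_card_of_sign {s : Finset ℕ} {x : ℕ → ℤ} (hx : ∀ i ∈ s, x i = 1 ∨ x i = -1) :
    ∑ i ∈ s, x i ^ 2 = #s := by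
  rw [card_eq_sum_ones, Nat.cast_sum, Nat.cast_one]
  refine sum_congr rfl fun i hi => ?_
  rcases hx i hi with h | h <;> simp [h]

theorem stmt_12_general (k : ℕ) (hk : 2 ≤ k) (a : ℤ) (ha : 0 < a)
    (x : ℕ → ℤ) (hx : ∀ i ∈ Finset.Icc 1 k, x i = 1 ∨ x i = -1)
    (hx1 : x 1 = -1) (hsat : 1 ≤ a * x 1 + ∑ i ∈ Finset.Icc 2 k, x i) :
    a ^ 2 + 2 * a - (k : ℤ) + 2 ≤ 2 * ∑ i ∈ Finset.Icc 2 k, ∑ j ∈ Finset.Icc (i + 1) k, x i * x j := by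
  set S := ∑ i ∈ Icc 2 k, x i
  have hS : a + 1 ≤ S := by rw [hx1] at hsat; linarith
  have hsq : ∑ i ∈ Icc 2 k, x i ^ 2 = (k : ℤ) - 1 := by
    rw [sum_sq_eq_card_of_sign fun i hi => hx i (Icc_subset_Icc_left one_le_two hi),
      Nat.card_Icc]
    omega
  have hexpand := sq_sum_Icc_eq x 2 k
  nlinarith

/-- Let `k ≥ 2` and let `a` be a positive integer with `a + k − 1` odd. Every
`x ∈ {−1,1}^k` (indices `1,…,k`) with `x 1 = −1` and `a·x₁ + Σ_{i=2}^k x_i ≥ 1`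
satisfies `2·Σ_{2≤i<j≤k} x_i x_j ≥ a² + 2a − k + 2`. -/
theorem stmt_12 (k : ℕ) (hk : 2 ≤ k) (a : ℤ) (ha : 0 < a) (hodd : Odd (a + (k : ℤ) - 1))
    (x : ℕ → ℤ) (hx : ∀ i ∈ Finset.Icc 1 k, x i = 1 ∨ x i = -1)
    (hx1 : x 1 = -1) (hsat : 1 ≤ a * x 1 + ∑ i ∈ Finset.Icc 2 k, x i) :
    a ^ 2 + 2 * a - (k : ℤ) + 2 ≤ 2 * ∑ i ∈ Finset.Icc 2 k, ∑ j ∈ Finset.Icc (i + 1) k, x i * x j :=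
  stmt_12_general k hk a ha x hx hx1 hsat
end

section
/- Let δ₀ ∈ (0,1), let B = max(5/δ₀, (1/0.45)·ln(5/δ₀²)), and define h : ℝ → ℝ by h(x) = 1 − (1−x)³·exp(−B·x). Then: (i) h'(1) = 0 and h''(1) = 0; (ii) for every Δ ∈ [−0.55, 1/δ₀²], |h(1+Δ) − 1| ≤ (δ₀²/5)·|Δ|; (iii) for every Δ ∈ [−1, −0.55], 0 ≤ h(1+Δ) ≤ 1. -/
/-!
Shifting to `x = 1 + Δ` gives `h (1 + Δ) = 1 + Δ³ e^{-B(1+Δ)}`, so `h - 1` vanishes to third order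
at `1` and the Lipschitz-type bound (ii) reduces to `Δ² e^{-B(1+Δ)} ≤ δ₀²/5`. For `Δ ≤ 0` this
follows from `Δ² ≤ 1` and `1 + Δ ≥ 0.45`, which is where `B ≥ ln(5/δ₀²)/0.45` enters; for `Δ > 0`
from `t² e^{-t} ≤ 2` at `t = BΔ`, which gives `Δ² e^{-BΔ} ≤ 2/B² ≤ δ₀²/5` since `B ≥ 5/δ₀`.
-/

open Real

theorem hasDerivAt_one_sub_cube_mul_exp (B x : ℝ) :
    HasDerivAt (fun x => 1 - (1 - x) ^ 3 * exp (-B * x))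
      ((1 - x) ^ 2 * ((3 + B * (1 - x)) * exp (-B * x))) x := by
  have hexp : HasDerivAt (fun x => exp (-B * x)) (exp (-B * x) * (-B)) x := by
    simpa using ((hasDerivAt_id x).const_mul (-B)).exp
  refine ((((hasDerivAt_id x).const_sub 1).pow 3).mul hexp).const_sub 1 |>.congr_deriv ?_
  simp only [Pi.pow_apply, id]
  ring

theorem hasDerivAt_sub_sq_mul_zero {g : ℝ → ℝ} {a : ℝ} (hg : DifferentiableAt ℝ g a) :
    HasDerivAt (fun x => (a - x) ^ 2 * g x) 0 a := by
  refine (((hasDerivAt_id a).const_sub a).pow 2).mul hg.hasDerivAt |>.congr_deriv ?_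
  simp

theorem sq_mul_exp_neg_le_two {t : ℝ} (ht : 0 ≤ t) : t ^ 2 * exp (-t) ≤ 2 := by
  have hquad := quadratic_le_exp_of_nonneg ht
  rw [exp_neg, ← div_eq_mul_inv, div_le_iff₀ (exp_pos t)]
  nlinarith

theorem sq_mul_exp_neg_mul_le {B Δ : ℝ} (hB : 0 < B) (hΔ : 0 ≤ Δ) :
    Δ ^ 2 * exp (-(B * Δ)) ≤ 2 / B ^ 2 := by
  rw [le_div_iff₀ (by positivity)]
  calc Δ ^ 2 * exp (-(B * Δ)) * B ^ 2 = (B * Δ) ^ 2 * exp (-(B * Δ)) := by ring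
    _ ≤ 2 := sq_mul_exp_neg_le_two (by positivity)

theorem exp_neg_mul_le_of_log_inv_le {B s x c : ℝ} (hc : 0 < c) (hB : 0 ≤ B)
    (hlog : log c⁻¹ ≤ B * s) (hx : s ≤ x) : exp (-B * x) ≤ c := by
  calc exp (-B * x) ≤ exp (-log c⁻¹) := exp_le_exp.2 (by nlinarith)
    _ = c := by rw [exp_neg, exp_log (inv_pos.2 hc), inv_inv]

section DampingBound

variable {δ₀ B Δ : ℝ}

theorem sq_mul_exp_le_of_nonpos (h0 : 0 < δ₀) (hB : 0 ≤ B)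
    (hlog : (1 / 0.45) * log (5 / δ₀ ^ 2) ≤ B) (hlo : -0.55 ≤ Δ) (hΔ : Δ ≤ 0) :
    Δ ^ 2 * exp (-B * (1 + Δ)) ≤ δ₀ ^ 2 / 5 := by
  have hexp : exp (-B * (1 + Δ)) ≤ δ₀ ^ 2 / 5 :=
    exp_neg_mul_le_of_log_inv_le (s := 0.45) (by positivity) hB
      (by rw [inv_div]; linarith) (by linarith)
  have hsq : Δ ^ 2 ≤ 1 := by nlinarith
  calc Δ ^ 2 * exp (-B * (1 + Δ)) ≤ 1 * (δ₀ ^ 2 / 5) :=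
        mul_le_mul hsq hexp (exp_pos _).le zero_le_one
    _ = δ₀ ^ 2 / 5 := one_mul _

theorem sq_mul_exp_le_of_nonneg (h0 : 0 < δ₀) (hB : 5 / δ₀ ≤ B) (hΔ : 0 ≤ Δ) :
    Δ ^ 2 * exp (-B * (1 + Δ)) ≤ δ₀ ^ 2 / 5 := by
  have hBpos : 0 < B := lt_of_lt_of_le (by positivity) hB
  have hBδ : 5 ≤ B * δ₀ := (div_le_iff₀ h0).1 hB
  have hinv : 2 / B ^ 2 ≤ δ₀ ^ 2 / 5 := by
    rw [div_le_div_iff₀ (by positivity) (by norm_num)]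
    nlinarith
  calc Δ ^ 2 * exp (-B * (1 + Δ)) ≤ Δ ^ 2 * exp (-(B * Δ)) := by
        gcongr
        linarith
    _ ≤ 2 / B ^ 2 := sq_mul_exp_neg_mul_le hBpos hΔ
    _ ≤ δ₀ ^ 2 / 5 := hinv

end DampingBound

theorem one_add_cube_mul_mem_unitInterval {Δ e : ℝ} (hlo : -1 ≤ Δ) (hhi : Δ ≤ 0)
    (he0 : 0 ≤ e) (he1 : e ≤ 1) : 0 ≤ 1 + Δ ^ 3 * e ∧ 1 + Δ ^ 3 * e ≤ 1 := by
  have hcube_nonpos : Δ ^ 3 ≤ 0 := Odd.pow_nonpos (by decide) hhi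
  have hcube_ge : -1 ≤ Δ ^ 3 := by
    have := pow_le_pow_left₀ (neg_nonneg.2 hhi) (neg_le.1 hlo) 3
    rw [Odd.neg_pow (by decide), one_pow] at this
    linarith
  constructor <;> nlinarith

theorem stmt_13_general (δ₀ : ℝ) (h0 : 0 < δ₀) (B : ℝ)
    (hB : B = max (5 / δ₀) ((1 / 0.45) * Real.log (5 / δ₀ ^ 2)))
    (h : ℝ → ℝ) (hh : h = fun x => 1 - (1 - x) ^ 3 * Real.exp (-B * x)) :
    (deriv h 1 = 0 ∧ deriv (deriv h) 1 = 0) ∧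
    (∀ Δ : ℝ, -0.55 ≤ Δ → Δ ≤ 1 / δ₀ ^ 2 → |h (1 + Δ) - 1| ≤ δ₀ ^ 2 / 5 * |Δ|) ∧
    (∀ Δ : ℝ, -1 ≤ Δ → Δ ≤ -0.55 → 0 ≤ h (1 + Δ) ∧ h (1 + Δ) ≤ 1) := by
  have hB5 : 5 / δ₀ ≤ B := hB ▸ le_max_left _ _
  have hBlog : (1 / 0.45) * log (5 / δ₀ ^ 2) ≤ B := hB ▸ le_max_right _ _
  have hBpos : 0 < B := lt_of_lt_of_le (by positivity) hB5
  have hderiv : deriv h = fun x => (1 - x) ^ 2 * ((3 + B * (1 - x)) * exp (-B * x)) :=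
    funext fun x => hh ▸ (hasDerivAt_one_sub_cube_mul_exp B x).deriv
  have hshift : ∀ Δ, h (1 + Δ) = 1 + Δ ^ 3 * exp (-B * (1 + Δ)) := fun Δ => by
    subst hh
    ring
  refine ⟨⟨by simp [hderiv], ?_⟩, fun Δ hlo _ => ?_, fun Δ hlo hhi => ?_⟩
  · rw [hderiv]
    exact (hasDerivAt_sub_sq_mul_zero (by fun_prop)).deriv
  · have hdamp : Δ ^ 2 * exp (-B * (1 + Δ)) ≤ δ₀ ^ 2 / 5 := by
      rcases le_total Δ 0 with hΔ | hΔ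
      · exact sq_mul_exp_le_of_nonpos h0 hBpos.le hBlog hlo hΔ
      · exact sq_mul_exp_le_of_nonneg h0 hB5 hΔ
    calc |h (1 + Δ) - 1| = Δ ^ 2 * exp (-B * (1 + Δ)) * |Δ| := by
          rw [hshift, add_sub_cancel_left, abs_mul, abs_of_pos (exp_pos _), abs_pow, ← sq_abs Δ]
          ring
      _ ≤ δ₀ ^ 2 / 5 * |Δ| := mul_le_mul_of_nonneg_right hdamp (abs_nonneg Δ)
  · rw [hshift]
    exact one_add_cube_mul_mem_unitInterval hlo (by linarith) (exp_pos _).le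
      (exp_le_one_iff.2 (by nlinarith))

/-- For `δ₀ ∈ (0,1)`, `B = max(5/δ₀, (1/0.45)·ln(5/δ₀²))` and
`h(x) = 1 − (1−x)³·exp(−B·x)`: (i) `h'(1) = h''(1) = 0`;
(ii) `|h(1+Δ) − 1| ≤ (δ₀²/5)|Δ|` for `Δ ∈ [−0.55, 1/δ₀²]`;
(iii) `0 ≤ h(1+Δ) ≤ 1` for `Δ ∈ [−1, −0.55]`. -/
theorem stmt_13 (δ₀ : ℝ) (h0 : 0 < δ₀) (h1 : δ₀ < 1) (B : ℝ)
    (hB : B = max (5 / δ₀) ((1 / 0.45) * Real.log (5 / δ₀ ^ 2)))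
    (h : ℝ → ℝ) (hh : h = fun x => 1 - (1 - x) ^ 3 * Real.exp (-B * x)) :
    (deriv h 1 = 0 ∧ deriv (deriv h) 1 = 0) ∧
    (∀ Δ : ℝ, -0.55 ≤ Δ → Δ ≤ 1 / δ₀ ^ 2 → |h (1 + Δ) - 1| ≤ δ₀ ^ 2 / 5 * |Δ|) ∧
    (∀ Δ : ℝ, -1 ≤ Δ → Δ ≤ -0.55 → 0 ≤ h (1 + Δ) ∧ h (1 + Δ) ≤ 1) :=
  stmt_13_general δ₀ h0 B hB h hh
end

section
/- Let δ₀ ∈ (0,1) and let B be any real number with B ≥ max(5/δ₀, (1/0.45)·ln(5/δ₀²)). Then for every real Δ ≥ −0.55, Δ²·exp(−B·(1+Δ)) < δ₀²/5. -/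
/-- For `δ₀ ∈ (0,1)` and any `B ≥ max(5/δ₀, (1/0.45)·ln(5/δ₀²))`,
every real `Δ ≥ −0.55` satisfies `Δ²·exp(−B·(1+Δ)) < δ₀²/5`. -/
theorem stmt_14 (δ₀ : ℝ) (h0 : 0 < δ₀) (h1 : δ₀ < 1) (B : ℝ)
    (hB : max (5 / δ₀) ((1 / 0.45) * Real.log (5 / δ₀ ^ 2)) ≤ B) :
    ∀ Δ : ℝ, -0.55 ≤ Δ → Δ ^ 2 * Real.exp (-B * (1 + Δ)) < δ₀ ^ 2 / 5 := by
  intro Δ hΔ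
  have hδ2 : (0:ℝ) < 5 / δ₀ ^ 2 := by positivity
  have hB1 : 5 / δ₀ ≤ B := le_trans (le_max_left _ _) hB
  have hB5 : (5:ℝ) ≤ B := by
    have h5 : (5:ℝ) ≤ 5 / δ₀ := by
      rw [le_div_iff₀ h0]; nlinarith
    linarith
  have hB2 : (1 / 0.45) * Real.log (5 / δ₀ ^ 2) ≤ B := le_trans (le_max_right _ _) hB
  have hlog : Real.log (5 / δ₀ ^ 2) ≤ 0.45 * B := by nlinarith
  have hc : Real.exp (-(0.45 * B)) ≤ δ₀ ^ 2 / 5 := by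
    calc Real.exp (-(0.45 * B)) ≤ Real.exp (-(Real.log (5 / δ₀ ^ 2))) :=
          Real.exp_le_exp.mpr (neg_le_neg hlog)
      _ = δ₀ ^ 2 / 5 := by rw [Real.exp_neg, Real.exp_log hδ2, inv_div]
  have hkey : Δ ^ 2 * Real.exp (-B * (0.55 + Δ)) < 1 := by
    rcases le_or_gt Δ 0 with hle | hpos
    · have hexp : Real.exp (-B * (0.55 + Δ)) ≤ 1 := by
        rw [Real.exp_le_one_iff]; nlinarith
      nlinarith [Real.exp_pos (-B * (0.55 + Δ)), sq_nonneg Δ]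
    · have hexp : Real.exp (-B * (0.55 + Δ)) ≤ Real.exp (-(5 * Δ)) := by
        apply Real.exp_le_exp.mpr; nlinarith
      have h5 : Real.exp (-(5 * Δ)) = (Real.exp (2.5 * Δ))⁻¹ ^ 2 := by
        rw [← Real.exp_neg, ← Real.exp_nat_mul]
        norm_num
        ring_nf
      have hq : Δ ^ 2 < Real.exp (2.5 * Δ) ^ 2 := by
        nlinarith [Real.add_one_le_exp (2.5 * Δ), Real.exp_pos (2.5 * Δ)]
      have hfin : Δ ^ 2 * Real.exp (-(5 * Δ)) < 1 := by
        rw [h5]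
        have he := Real.exp_pos (2.5 * Δ)
        rw [inv_pow, mul_inv_lt_iff₀' (by positivity)]
        nlinarith [hq]
      calc Δ ^ 2 * Real.exp (-B * (0.55 + Δ))
          ≤ Δ ^ 2 * Real.exp (-(5 * Δ)) := by
            apply mul_le_mul_of_nonneg_left hexp (sq_nonneg Δ)
        _ < 1 := hfin
  have hsplit : Real.exp (-B * (1 + Δ)) =
      Real.exp (-B * (0.55 + Δ)) * Real.exp (-(0.45 * B)) := by
    rw [← Real.exp_add]; ring_nf
  rw [hsplit, ← mul_assoc]
  calc Δ ^ 2 * Real.exp (-B * (0.55 + Δ)) * Real.exp (-(0.45 * B))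
      < 1 * Real.exp (-(0.45 * B)) := by
        exact mul_lt_mul_of_pos_right hkey (Real.exp_pos _)
    _ ≤ δ₀ ^ 2 / 5 := by rw [one_mul]; exact hc
end

section
/- Let δ₀ ∈ (0,1) and let B = max(5/δ₀, (1/0.45)·ln(5/δ₀²)). Then there exists m ∈ ℕ such that the polynomial function h(x) = 1 − (1−x)³·Σ_{l=0}^{m} (−B·x)^l / l! satisfies: h(0) = 0; h'(1) = 0 and h''(1) = 0; for every Δ ∈ [−0.55, 1/δ₀²], |h(1+Δ) − 1| ≤ (δ₀²/5)·|Δ|; and for every Δ ∈ [−1, −0.55], 0 ≤ h(1+Δ) ≤ 1. -/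
set_option maxHeartbeats 4000000

open Real Finset Polynomial Filter


lemma tail_bound (m : ℕ) (t : ℝ) (ht : 0 ≤ t) :
    |Real.exp (-t) - ∑ l ∈ Finset.range (m + 1), (-t) ^ l / (Nat.factorial l : ℝ)|
      ≤ t ^ (m + 1) / (Nat.factorial (m + 1) : ℝ) * Real.exp t := by
  have hexp : ∀ x : ℝ, Real.exp x = ∑' n : ℕ, x ^ n / (Nat.factorial n : ℝ) := by
    intro x
    rw [Real.exp_eq_exp_ℝ, NormedSpace.exp_eq_tsum_div]
  have hs : Summable (fun n : ℕ => (-t) ^ n / (Nat.factorial n : ℝ)) :=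
    Real.summable_pow_div_factorial (-t)
  have hsplit := Summable.sum_add_tsum_nat_add (f := fun n : ℕ => (-t) ^ n / (Nat.factorial n : ℝ)) (m + 1) hs
  have key : Real.exp (-t) - ∑ l ∈ Finset.range (m + 1), (-t) ^ l / (Nat.factorial l : ℝ)
      = ∑' n : ℕ, (-t) ^ (n + (m + 1)) / (Nat.factorial (n + (m + 1)) : ℝ) := by
    rw [hexp (-t), ← hsplit]; ring
  rw [key]
  have hbound : ∀ n : ℕ, |(-t) ^ (n + (m + 1)) / (Nat.factorial (n + (m + 1)) : ℝ)|
      ≤ t ^ (m + 1) / (Nat.factorial (m + 1) : ℝ) * (t ^ n / (Nat.factorial n : ℝ)) := by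
    intro n
    have hfac : (Nat.factorial (m + 1) : ℝ) * (Nat.factorial n : ℝ)
        ≤ (Nat.factorial (n + (m + 1)) : ℝ) := by
      rw [add_comm n (m + 1)]
      exact_mod_cast Nat.le_of_dvd (Nat.factorial_pos _)
        (Nat.factorial_mul_factorial_dvd_factorial_add _ _)
    have h1 : |(-t) ^ (n + (m + 1)) / (Nat.factorial (n + (m + 1)) : ℝ)|
        = t ^ (n + (m + 1)) / (Nat.factorial (n + (m + 1)) : ℝ) := by
      rw [abs_div, abs_pow, abs_neg, abs_of_nonneg ht, abs_of_nonneg (by positivity)]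
    rw [h1, pow_add, div_mul_div_comm, mul_comm (t ^ n) (t ^ (m+1))]
    apply div_le_div_of_nonneg_left (by positivity) (by positivity)
    nlinarith [hfac]
  have hg : HasSum (fun n : ℕ => t ^ (m + 1) / (Nat.factorial (m + 1) : ℝ) * (t ^ n / (Nat.factorial n : ℝ)))
      (t ^ (m + 1) / (Nat.factorial (m + 1) : ℝ) * Real.exp t) := by
    have h := (Real.summable_pow_div_factorial t).hasSum
    rw [← hexp t] at h
    exact h.mul_left _
  have : ‖∑' n : ℕ, (-t) ^ (n + (m + 1)) / (Nat.factorial (n + (m + 1)) : ℝ)‖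
      ≤ t ^ (m + 1) / (Nat.factorial (m + 1) : ℝ) * Real.exp t :=
    tsum_of_norm_bounded hg (fun n => by rw [Real.norm_eq_abs]; exact hbound n)
  simpa [Real.norm_eq_abs] using this



lemma dvd_deriv (k : ℕ) (q : ℝ[X]) :
    ∃ r : ℝ[X], Polynomial.derivative ((1 - Polynomial.X) ^ (k + 1) * q)
      = (1 - Polynomial.X) ^ k * r := by
  refine ⟨-(((k : ℝ[X]) + 1) * q) + (1 - Polynomial.X) * Polynomial.derivative q, ?_⟩
  rw [Polynomial.derivative_mul, Polynomial.derivative_pow]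
  simp only [Polynomial.derivative_sub, Polynomial.derivative_one, Polynomial.derivative_X,
    Nat.add_sub_cancel, Nat.cast_add, Nat.cast_one, Polynomial.C_add, Polynomial.C_1,
    Polynomial.C_eq_natCast]
  ring

lemma deriv_facts (B : ℝ) (m : ℕ) (h : ℝ → ℝ)
    (hfun : h = (fun x => 1 - (1 - x) ^ 3 *
      ∑ l ∈ Finset.range (m + 1), (-B * x) ^ l / (Nat.factorial l : ℝ))) :
    h 0 = 0 ∧ deriv h 1 = 0 ∧ deriv (deriv h) 1 = 0 := by
  set Q : ℝ[X] := ∑ l ∈ Finset.range (m + 1),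
    Polynomial.C ((-B) ^ l / (Nat.factorial l : ℝ)) * Polynomial.X ^ l with hQ
  set H : ℝ[X] := Polynomial.C 1 - (1 - Polynomial.X) ^ 3 * Q with hHdef
  have hh : h = fun x => Polynomial.eval x H := by
    rw [hfun]; funext x
    simp only [hHdef, hQ, Polynomial.eval_sub, Polynomial.eval_one, Polynomial.eval_mul,
      Polynomial.eval_pow, Polynomial.eval_C, Polynomial.eval_X, Polynomial.eval_finset_sum]
    congr 1
    congr 1
    apply Finset.sum_congr rfl
    intro l _
    rw [mul_pow]; ring
  have h0 : h 0 = 0 := by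
    rw [hfun]
    simp only
    rw [Finset.sum_eq_single 0]
    · norm_num
    · intro b _ hb; simp [zero_pow hb]
    · intro habs; exact absurd (Finset.mem_range.2 (Nat.succ_pos m)) habs
  obtain ⟨r, hr⟩ := dvd_deriv 2 Q
  have hdH : Polynomial.derivative H = -((1 - Polynomial.X) ^ 2 * r) := by
    rw [hHdef, Polynomial.derivative_sub]
    simp only [Polynomial.derivative_C, zero_sub]
    exact congrArg Neg.neg hr
  obtain ⟨r2, hr2⟩ := dvd_deriv 1 r
  have hd1 : deriv h = fun x => Polynomial.eval x (Polynomial.derivative H) := by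
    funext x; rw [hh]; exact Polynomial.deriv (p := H)
  have e1 : deriv h 1 = 0 := by
    rw [hd1]; simp only [hdH]; simp
  have e2 : deriv (deriv h) 1 = 0 := by
    rw [hd1]
    rw [show (fun x => Polynomial.eval x (Polynomial.derivative H))
        = fun x => Polynomial.eval x (-((1 - Polynomial.X) ^ 2 * r)) by rw [hdH]]
    have : deriv (fun x => Polynomial.eval x (-((1 - Polynomial.X) ^ 2 * r))) 1
        = Polynomial.eval 1 (Polynomial.derivative (-((1 - Polynomial.X) ^ 2 * r))) :=
      Polynomial.deriv (p := -((1 - Polynomial.X) ^ 2 * r))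
    rw [this, Polynomial.derivative_neg]
    rw [show Polynomial.derivative ((1 - Polynomial.X) ^ 2 * r)
        = (1 - Polynomial.X) ^ 1 * r2 from hr2]
    simp
  exact ⟨h0, e1, e2⟩



/-- For `δ₀ ∈ (0,1)` and `B = max(5/δ₀, (1/0.45)·ln(5/δ₀²))`, there exists
`m ∈ ℕ` such that the polynomial `h(x) = 1 − (1−x)³·Σ_{l=0}^{m} (−Bx)^l/l!`
(the degree-`m` Taylor truncation of `exp(−Bx)` in place of the exponential)
satisfies: `h(0) = 0`; `h'(1) = h''(1) = 0`;
`|h(1+Δ) − 1| ≤ (δ₀²/5)|Δ|` for `Δ ∈ [−0.55, 1/δ₀²]`; and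
`0 ≤ h(1+Δ) ≤ 1` for `Δ ∈ [−1, −0.55]`. -/
theorem stmt_15 (δ₀ : ℝ) (h0 : 0 < δ₀) (h1 : δ₀ < 1) (B : ℝ)
    (hB : B = max (5 / δ₀) ((1 / 0.45) * Real.log (5 / δ₀ ^ 2))) :
    ∃ m : ℕ, ∀ h : ℝ → ℝ,
      h = (fun x => 1 - (1 - x) ^ 3 *
            ∑ l ∈ Finset.range (m + 1), (-B * x) ^ l / (Nat.factorial l : ℝ)) →
      h 0 = 0 ∧ deriv h 1 = 0 ∧ deriv (deriv h) 1 = 0 ∧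
      (∀ Δ : ℝ, -0.55 ≤ Δ → Δ ≤ 1 / δ₀ ^ 2 → |h (1 + Δ) - 1| ≤ δ₀ ^ 2 / 5 * |Δ|) ∧
      (∀ Δ : ℝ, -1 ≤ Δ → Δ ≤ -0.55 → 0 ≤ h (1 + Δ) ∧ h (1 + Δ) ≤ 1) := by
    -- basic facts about B
  have hB5 : (5 : ℝ) ≤ B := by
    rw [hB]
    refine le_trans ?_ (le_max_left _ _)
    rw [le_div_iff₀ h0]; nlinarith
  have hBpos : (0 : ℝ) < B := by linarith
  set T : ℝ := 1 + 1 / δ₀ ^ 2 with hTdef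
  have hd2pos : (0 : ℝ) < δ₀ ^ 2 := by positivity
  have hd2le1 : δ₀ ^ 2 ≤ 1 := by nlinarith
  have hT2 : (2 : ℝ) ≤ T := by
    have : (1 : ℝ) ≤ 1 / δ₀ ^ 2 := by rw [le_div_iff₀ hd2pos]; nlinarith
    simp only [hTdef]; linarith
  have hTpos : (0 : ℝ) < T := by linarith
  have hexpB : Real.exp (-(0.45 * B)) ≤ δ₀ ^ 2 / 5 := by
    have hlog : Real.log (5 / δ₀ ^ 2) ≤ 0.45 * B := by
      have h' := le_max_right (5 / δ₀) ((1 / 0.45) * Real.log (5 / δ₀ ^ 2))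
      rw [← hB] at h'
      nlinarith [h']
    have h5 : (0 : ℝ) < 5 / δ₀ ^ 2 := by positivity
    have hle : 5 / δ₀ ^ 2 ≤ Real.exp (0.45 * B) := by
      rw [← Real.exp_log h5]; exact Real.exp_le_exp.2 hlog
    rw [Real.exp_neg]
    have := inv_anti₀ h5 hle
    rwa [inv_div] at this
  -- choose m
  obtain ⟨m, hCle, hDle⟩ : ∃ m : ℕ,
      B * Real.exp (0.45 * B) * ((0.45 * B) ^ m / (Nat.factorial m : ℝ))
        ≤ min 1 (Real.exp (-(0.45 * B))) ∧
      Real.exp (B * T) * ((B * T) ^ (m + 1) / (Nat.factorial (m + 1) : ℝ))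
        ≤ δ₀ ^ 2 / (10 * T ^ 2) := by
    have hCt : Tendsto (fun m : ℕ => B * Real.exp (0.45 * B) *
        ((0.45 * B) ^ m / (Nat.factorial m : ℝ))) atTop (nhds 0) := by
      have := (FloorSemiring.tendsto_pow_div_factorial_atTop (K := ℝ) (0.45 * B)).const_mul
        (B * Real.exp (0.45 * B))
      simpa using this
    have hDt : Tendsto (fun m : ℕ => Real.exp (B * T) *
        ((B * T) ^ (m + 1) / (Nat.factorial (m + 1) : ℝ))) atTop (nhds 0) := by
      have hbase := (FloorSemiring.tendsto_pow_div_factorial_atTop (K := ℝ) (B * T)).comp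
        (tendsto_add_atTop_nat 1)
      have := hbase.const_mul (Real.exp (B * T))
      simpa [Function.comp] using this
    have hε₁ : (0 : ℝ) < min 1 (Real.exp (-(0.45 * B))) :=
      lt_min one_pos (Real.exp_pos _)
    have hε₂ : (0 : ℝ) < δ₀ ^ 2 / (10 * T ^ 2) := by positivity
    exact ((hCt.eventually_le_const hε₁).and (hDt.eventually_le_const hε₂)).exists
  refine ⟨m, fun h hfun => ?_⟩
  obtain ⟨h00, e1, e2⟩ := deriv_facts B m h hfun
  set S : ℝ → ℝ := fun x => ∑ l ∈ Finset.range (m + 1),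
    (-B * x) ^ l / (Nat.factorial l : ℝ) with hSdef
  have hhx : ∀ y : ℝ, h y = 1 - (1 - y) ^ 3 * S y := by
    intro y; rw [hfun]
  have tailS : ∀ x : ℝ, 0 ≤ x → |Real.exp (-(B * x)) - S x|
      ≤ (B * x) ^ (m + 1) / (Nat.factorial (m + 1) : ℝ) * Real.exp (B * x) := by
    intro x hx
    have := tail_bound m (B * x) (by positivity)
    simpa [hSdef, neg_mul] using this
  have hCpos : (0 : ℝ) ≤ B * Real.exp (0.45 * B) * ((0.45 * B) ^ m / (Nat.factorial m : ℝ)) := by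
    positivity
  refine ⟨h00, e1, e2, ?_, ?_⟩
  · -- part A
    intro Δ hΔ1 hΔ2
    set x : ℝ := 1 + Δ with hxdef
    have hx45 : (0.45 : ℝ) ≤ x := by simp only [hxdef]; norm_num at hΔ1 ⊢; linarith
    have hx0 : (0 : ℝ) ≤ x := by linarith
    have hxT : x ≤ T := by simp only [hxdef, hTdef]; linarith
    -- tail ≤ D
    have htail : |Real.exp (-(B * x)) - S x|
        ≤ Real.exp (B * T) * ((B * T) ^ (m + 1) / (Nat.factorial (m + 1) : ℝ)) := by
      refine le_trans (tailS x hx0) ?_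
      rw [mul_comm (Real.exp (B * T))]
      have p1 : (B * x) ^ (m + 1) ≤ (B * T) ^ (m + 1) :=
        pow_le_pow_left₀ (by positivity) (by nlinarith) _
      have p2 : Real.exp (B * x) ≤ Real.exp (B * T) := Real.exp_le_exp.2 (by nlinarith)
      exact mul_le_mul ((div_le_div_iff_of_pos_right (by positivity)).2 p1) p2
        (Real.exp_pos _).le (by positivity)
    have hSb : |S x| ≤ Real.exp (-(B * x))
        + Real.exp (B * T) * ((B * T) ^ (m + 1) / (Nat.factorial (m + 1) : ℝ)) := by
      have h' : |S x| - |Real.exp (-(B * x))| ≤ |S x - Real.exp (-(B * x))| :=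
        abs_sub_abs_le_abs_sub _ _
      rw [abs_sub_comm] at h'
      have h'' : |Real.exp (-(B * x))| = Real.exp (-(B * x)) := abs_of_pos (Real.exp_pos _)
      linarith [htail]
    -- Δ² E ≤ δ₀²/10
    have hE1 : Δ ^ 2 * Real.exp (-(B * x)) ≤ δ₀ ^ 2 / 10 := by
      rcases le_or_gt Δ 0 with hc | hc
      · have hΔsq : Δ ^ 2 ≤ 0.3025 := by norm_num at hΔ1 ⊢; nlinarith
        have hEe : Real.exp (-(B * x)) ≤ Real.exp (-(0.45 * B)) := by
          apply Real.exp_le_exp.2; nlinarith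
        have := Real.exp_pos (-(B * x))
        nlinarith [hexpB, hd2pos]
      · -- Δ > 0
        have hq : B ^ 2 * Δ ^ 2 / 4 ≤ Real.exp (B * Δ) := by
          have h' := Real.add_one_le_exp (B * Δ / 2)
          have hsq : Real.exp (B * Δ / 2) ^ 2 = Real.exp (B * Δ) := by
            rw [sq, ← Real.exp_add]; ring_nf
          nlinarith [Real.exp_pos (B * Δ / 2), mul_pos hBpos hc]
        have k1 : Δ ^ 2 ≤ (1 / 2) * Real.exp (B * Δ) := by
          nlinarith [hq, sq_nonneg Δ, sq_nonneg (B * Δ), mul_pos hBpos hc,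
            mul_le_mul_of_nonneg_right (show (25 : ℝ) ≤ B ^ 2 by nlinarith) (sq_nonneg Δ)]
        have k2 : Δ ^ 2 * Real.exp (-(B * Δ)) ≤ 1 / 2 := by
          rw [Real.exp_neg, mul_inv_le_iff₀ (Real.exp_pos _)]
          linarith [k1]
        have hEB : Real.exp (-B) ≤ δ₀ ^ 2 / 5 :=
          le_trans (Real.exp_le_exp.2 (by nlinarith)) hexpB
        have hsplit : Real.exp (-(B * x)) = Real.exp (-B) * Real.exp (-(B * Δ)) := by
          rw [← Real.exp_add]; congr 1; simp only [hxdef]; ring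
        calc Δ ^ 2 * Real.exp (-(B * x))
            = Real.exp (-B) * (Δ ^ 2 * Real.exp (-(B * Δ))) := by rw [hsplit]; ring
          _ ≤ (δ₀ ^ 2 / 5) * (1 / 2) := by
              apply mul_le_mul hEB k2 (by positivity) (by positivity)
          _ ≤ δ₀ ^ 2 / 10 := by nlinarith
    -- Δ² D ≤ δ₀²/10
    have hΔT : Δ ^ 2 ≤ T ^ 2 := by
      have h1' : -T ≤ Δ := by norm_num at hΔ1 ⊢; linarith
      have h2' : Δ ≤ T := by simp only [hTdef] at *; linarith
      nlinarith
    have hDpos : (0 : ℝ) ≤ Real.exp (B * T) * ((B * T) ^ (m + 1) / (Nat.factorial (m + 1) : ℝ)) := by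
      positivity
    have hE2 : Δ ^ 2 * (Real.exp (B * T) * ((B * T) ^ (m + 1) / (Nat.factorial (m + 1) : ℝ)))
        ≤ δ₀ ^ 2 / 10 := by
      have step : Δ ^ 2 * (Real.exp (B * T) * ((B * T) ^ (m + 1) / (Nat.factorial (m + 1) : ℝ)))
          ≤ T ^ 2 * (δ₀ ^ 2 / (10 * T ^ 2)) := by
        apply mul_le_mul hΔT hDle hDpos (by positivity)
      have heq : T ^ 2 * (δ₀ ^ 2 / (10 * T ^ 2)) = δ₀ ^ 2 / 10 := by
        field_simp
      linarith [step]
    have claimA : Δ ^ 2 * |S x| ≤ δ₀ ^ 2 / 5 := by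
      have := mul_le_mul_of_nonneg_left hSb (sq_nonneg Δ)
      nlinarith [hE1, hE2]
    -- conclude
    have habs : |h (1 + Δ) - 1| = Δ ^ 2 * |S (1 + Δ)| * |Δ| := by
      rw [hhx (1 + Δ)]
      have e : 1 - (1 - (1 + Δ)) ^ 3 * S (1 + Δ) - 1 = Δ ^ 3 * S (1 + Δ) := by ring
      rw [e, abs_mul, abs_pow]
      have : |Δ| ^ 3 = Δ ^ 2 * |Δ| := by
        rw [pow_succ, sq_abs]
      rw [this]; ring
    rw [habs]
    have : Δ ^ 2 * |S (1 + Δ)| ≤ δ₀ ^ 2 / 5 := claimA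
    exact mul_le_mul_of_nonneg_right this (abs_nonneg Δ)
  · -- part B
    intro Δ hΔ1 hΔ2
    set x : ℝ := 1 + Δ with hxdef
    have hx0 : (0 : ℝ) ≤ x := by simp only [hxdef]; linarith
    have hx45 : x ≤ 0.45 := by simp only [hxdef]; norm_num at hΔ2 ⊢; linarith
    set u : ℝ := -Δ with hudef
    have hu1 : u ≤ 1 := by simp only [hudef]; linarith
    have hu55 : (0.55 : ℝ) ≤ u := by simp only [hudef]; norm_num at hΔ2 ⊢; linarith
    have hu0 : (0 : ℝ) ≤ u := by linarith
    -- tail ≤ x * C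
    have htail : |Real.exp (-(B * x)) - S x|
        ≤ x * (B * Real.exp (0.45 * B) * ((0.45 * B) ^ m / (Nat.factorial m : ℝ))) := by
      refine le_trans (tailS x hx0) ?_
      have e1 : (B * x) ^ (m + 1) = B * x * (B * x) ^ m := by rw [pow_succ]; ring
      have efac : (Nat.factorial m : ℝ) ≤ (Nat.factorial (m + 1) : ℝ) := by
        exact_mod_cast Nat.factorial_le (Nat.le_succ m)
      have p1 : (B * x) ^ m ≤ (0.45 * B) ^ m :=
        pow_le_pow_left₀ (by positivity) (by nlinarith) m
      have p2 : Real.exp (B * x) ≤ Real.exp (0.45 * B) := Real.exp_le_exp.2 (by nlinarith)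
      have q1 : B * x * (B * x) ^ m / (Nat.factorial (m + 1) : ℝ)
          ≤ B * x * (0.45 * B) ^ m / (Nat.factorial m : ℝ) := by
        apply div_le_div₀ (by positivity)
          (mul_le_mul_of_nonneg_left p1 (by positivity)) (by positivity) efac
      calc (B * x) ^ (m + 1) / (Nat.factorial (m + 1) : ℝ) * Real.exp (B * x)
          = B * x * (B * x) ^ m / (Nat.factorial (m + 1) : ℝ) * Real.exp (B * x) := by rw [e1]
        _ ≤ B * x * (0.45 * B) ^ m / (Nat.factorial m : ℝ) * Real.exp (0.45 * B) :=
            mul_le_mul q1 p2 (Real.exp_pos _).le (by positivity)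
        _ = x * (B * Real.exp (0.45 * B) * ((0.45 * B) ^ m / (Nat.factorial m : ℝ))) := by
            ring
    have hC1 : B * Real.exp (0.45 * B) * ((0.45 * B) ^ m / (Nat.factorial m : ℝ)) ≤ 1 :=
      le_trans hCle (min_le_left _ _)
    have hC2 : B * Real.exp (0.45 * B) * ((0.45 * B) ^ m / (Nat.factorial m : ℝ))
        ≤ Real.exp (-(0.45 * B)) := le_trans hCle (min_le_right _ _)
    have habs' := abs_le.1 htail
    -- S x ≥ 0
    have hl1 : Real.exp (-(0.45 * B)) ≤ Real.exp (-(B * x)) := by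
      apply Real.exp_le_exp.2; nlinarith
    have hxC : x * (B * Real.exp (0.45 * B) * ((0.45 * B) ^ m / (Nat.factorial m : ℝ)))
        ≤ 0.45 * Real.exp (-(0.45 * B)) := by
      apply mul_le_mul hx45 hC2 hCpos (by norm_num)
    have hSpos : 0 ≤ S x := by
      have := habs'.2
      linarith [hl1, hxC]
    -- value of h
    have hval : h (1 + Δ) = 1 - u ^ 3 * S x := by
      rw [hhx (1 + Δ)]
      have : (1 - (1 + Δ)) = u := by simp only [hudef]; ring
      rw [show (1 : ℝ) + Δ = x from rfl, this]
    constructor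
    · -- 0 ≤ h, i.e. u³ S x ≤ 1
      rw [hval]
      have hu3 : u ^ 3 ≤ u := by
        nlinarith [mul_nonneg (mul_nonneg hu0 (show (0:ℝ) ≤ 1 - u by linarith))
          (show (0:ℝ) ≤ 1 + u by linarith)]
      have hSub : S x ≤ Real.exp (-(B * x))
          + x * (B * Real.exp (0.45 * B) * ((0.45 * B) ^ m / (Nat.factorial m : ℝ))) := by
        linarith [habs'.1]
      have step1 : u ^ 3 * S x ≤ u * (Real.exp (-(B * x))
          + x * (B * Real.exp (0.45 * B) * ((0.45 * B) ^ m / (Nat.factorial m : ℝ)))) :=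
        mul_le_mul hu3 hSub hSpos hu0
      have step2 : u * Real.exp (-(B * x)) ≤ Real.exp (-((B + 1) * x)) := by
        have hue : u ≤ Real.exp (-x) := by
          have := Real.add_one_le_exp (-x)
          simp only [hudef, hxdef] at *; linarith
        calc u * Real.exp (-(B * x)) ≤ Real.exp (-x) * Real.exp (-(B * x)) :=
              mul_le_mul_of_nonneg_right hue (Real.exp_pos _).le
          _ = Real.exp (-((B + 1) * x)) := by rw [← Real.exp_add]; ring_nf
      have step3 : u * (x * (B * Real.exp (0.45 * B) * ((0.45 * B) ^ m / (Nat.factorial m : ℝ))))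
          ≤ x := by
        have l1 : x * (B * Real.exp (0.45 * B) * ((0.45 * B) ^ m / (Nat.factorial m : ℝ)))
            ≤ x * 1 := mul_le_mul_of_nonneg_left hC1 hx0
        have l2 : u * (x * (B * Real.exp (0.45 * B) * ((0.45 * B) ^ m / (Nat.factorial m : ℝ))))
            ≤ 1 * (x * (B * Real.exp (0.45 * B) * ((0.45 * B) ^ m / (Nat.factorial m : ℝ)))) :=
          mul_le_mul_of_nonneg_right hu1 (by positivity)
        nlinarith [l1, l2]
      have step4 : Real.exp (-((B + 1) * x)) + x ≤ 1 := by
        have hc : (6 : ℝ) ≤ B + 1 := by linarith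
        have hmul : Real.exp (-((B + 1) * x)) * Real.exp ((B + 1) * x) = 1 := by
          rw [← Real.exp_add]; simp
        have haoe := Real.add_one_le_exp ((B + 1) * x)
        have hEpos := Real.exp_pos (-((B + 1) * x))
        have key : Real.exp (-((B + 1) * x)) * (1 + (B + 1) * x) ≤ 1 := by
          nlinarith [mul_nonneg hEpos.le
            (show (0 : ℝ) ≤ Real.exp ((B + 1) * x) - (1 + (B + 1) * x) by linarith)]
        nlinarith [key, mul_nonneg hx0
          (show (0 : ℝ) ≤ (B + 1) - 1 - (B + 1) * x by nlinarith)]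
      have total : u ^ 3 * S x ≤ 1 := by
        have expand : u * (Real.exp (-(B * x))
            + x * (B * Real.exp (0.45 * B) * ((0.45 * B) ^ m / (Nat.factorial m : ℝ))))
            = u * Real.exp (-(B * x))
            + u * (x * (B * Real.exp (0.45 * B) * ((0.45 * B) ^ m / (Nat.factorial m : ℝ)))) := by
          ring
        rw [expand] at step1
        exact le_trans (le_trans step1 (add_le_add step2 step3)) step4
      linarith
    · -- h ≤ 1
      rw [hval]
      have : 0 ≤ u ^ 3 * S x := mul_nonneg (by positivity) hSpos
      linarith
end

section
/- Fix an integer l ≥ 1. There exists a constant C > 0, depending only on l, such that for every integer k ≥ 2 and all real numbers b_i ∈ [−1,1] (1 ≤ i ≤ k) and b_{ij} ∈ [−1,1] (1 ≤ i < j ≤ k, with b_{ji} := b_{ij}), both of the following hold: |l!·S_{2,l} − b₁·M^l| ≤ C·k^{2l−1} and |l!·S_{3,l} − l·β·T₃·M^{l−1}| ≤ C·k^{2l−1}. -/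
/-!
Pair up the coordinates of a tuple `f : Fin (2l) → ℕ` as `(f (2m), f (2m+1))`. On injective tuples
the products defining `S₂` and `S₃` do not change if the diagonal of `c` is set to zero, and then
`l!·S₂ = b₁·2^{-l}·Σ` and `l!·S₃ = l·2^{-(l-1)}·Σ'`, where `Σ`, `Σ'` are sums over injective tuples
of products of pair weights bounded by `1`. Summed over *all* tuples these products factor into
products of double sums, namely `(2M)^l` and `β·T₃·(2M)^{l-1}`. The non-injective tuples number at
most `(2l)²·k^{2l-1}`, which bounds the error.
-/

open Finset

lemma card_filter_piFinset_apply_eq_apply_le {ι α : Type*} [Fintype ι] [DecidableEq ι]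
    [DecidableEq α] (s : Finset α) {a b : ι} (hab : a ≠ b) :
    #{f ∈ Fintype.piFinset fun _ : ι => s | f a = f b} ≤ #s ^ (Fintype.card ι - 1) := by
  calc #{f ∈ Fintype.piFinset fun _ : ι => s | f a = f b}
      ≤ #(Fintype.piFinset fun _ : {i // i ≠ b} => s) := by
        refine card_le_card_of_injOn (fun f i => f i) (fun f hf => ?_) (fun f hf g hg hfg => ?_)
        · simp_all [Fintype.mem_piFinset]
        · simp only [coe_filter, Set.mem_ofPred_eq] at hf hg
          funext i
          obtain rfl | hi := eq_or_ne i b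
          · rw [← hf.2, ← hg.2]; exact congrFun hfg ⟨a, hab⟩
          · exact congrFun hfg ⟨i, hi⟩
    _ = #s ^ (Fintype.card ι - 1) := by simp [Fintype.card_subtype_compl]

lemma card_filter_piFinset_not_injective_le {ι α : Type*} [Fintype ι] [DecidableEq ι]
    [DecidableEq α] (s : Finset α) :
    #{f ∈ Fintype.piFinset fun _ : ι => s | ¬ Function.Injective f} ≤
      Fintype.card ι ^ 2 * #s ^ (Fintype.card ι - 1) := by
  have hsub : {f ∈ Fintype.piFinset fun _ : ι => s | ¬ Function.Injective f} ⊆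
      (univ : Finset ι).offDiag.biUnion
        fun p => {f ∈ Fintype.piFinset fun _ : ι => s | f p.1 = f p.2} := by
    intro f hf
    obtain ⟨hfs, hf⟩ := mem_filter.mp hf
    obtain ⟨a, b, hab, hne⟩ := Function.not_injective_iff.mp hf
    exact mem_biUnion.mpr ⟨(a, b), by simpa using hne, mem_filter.mpr ⟨hfs, hab⟩⟩
  calc _ ≤ _ := card_le_card hsub
    _ ≤ ∑ p ∈ (univ : Finset ι).offDiag, #s ^ (Fintype.card ι - 1) :=
        card_biUnion_le.trans <| sum_le_sum fun p hp =>
          card_filter_piFinset_apply_eq_apply_le s (mem_offDiag.mp hp).2.2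
    _ ≤ Fintype.card ι ^ 2 * #s ^ (Fintype.card ι - 1) := by
        rw [sum_const, smul_eq_mul, offDiag_card, card_univ, sq]
        exact Nat.mul_le_mul_right _ (Nat.sub_le _ _)

lemma abs_sum_filter_injective_sub_sum_le {ι α : Type*} [Fintype ι] [DecidableEq ι]
    [DecidableEq α] (s : Finset α) (F : (ι → α) → ℝ)
    (hF : ∀ f ∈ Fintype.piFinset fun _ : ι => s, |F f| ≤ 1) :
    |∑ f ∈ Fintype.piFinset (fun _ : ι => s) with Function.Injective f, F f -
        ∑ f ∈ Fintype.piFinset fun _ : ι => s, F f| ≤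
      Fintype.card ι ^ 2 * #s ^ (Fintype.card ι - 1) := by
  rw [← sum_filter_add_sum_filter_not (Fintype.piFinset fun _ : ι => s) Function.Injective F,
    sub_add_cancel_left, abs_neg]
  calc _ ≤ ∑ f ∈ Fintype.piFinset (fun _ : ι => s) with ¬ Function.Injective f, |F f| :=
        abs_sum_le_sum_abs _ _
    _ ≤ ∑ f ∈ Fintype.piFinset (fun _ : ι => s) with ¬ Function.Injective f, 1 :=
        sum_le_sum fun f hf => hF f (mem_filter.mp hf).1
    _ ≤ _ := by
        rw [sum_const, nsmul_one]
        exact_mod_cast card_filter_piFinset_not_injective_le s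

def finTwoMulArrowEquiv (α : Type*) (l : ℕ) : (Fin (2 * l) → α) ≃ (Fin l → α × α) :=
  (((finCongr (Nat.mul_comm 2 l)).trans finProdFinEquiv.symm).arrowCongr (Equiv.refl α)).trans <|
    (Equiv.curry _ _ _).trans <| (Equiv.refl _).arrowCongr (piFinTwoEquiv fun _ => α)

lemma finTwoMulArrowEquiv_apply {α : Type*} {l : ℕ} (f : Fin (2 * l) → α) (m : Fin l) :
    finTwoMulArrowEquiv α l f m = (f ⟨2 * m, by omega⟩, f ⟨2 * m + 1, by omega⟩) := by
  simp [finTwoMulArrowEquiv, finProdFinEquiv, add_comm]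

lemma sum_piFinset_finTwoMulArrowEquiv {α M : Type*} [DecidableEq α] [AddCommMonoid M] {l : ℕ}
    (s : Finset α) (G : (Fin l → α × α) → M) :
    ∑ f ∈ Fintype.piFinset (fun _ : Fin (2 * l) => s), G (finTwoMulArrowEquiv α l f) =
      ∑ g ∈ Fintype.piFinset (fun _ : Fin l => s ×ˢ s), G g := by
  refine sum_equiv (finTwoMulArrowEquiv α l) (fun f => ?_) (fun _ _ => rfl)
  simp only [Fintype.mem_piFinset, finTwoMulArrowEquiv_apply, mem_product]
  refine ⟨fun h m => ⟨h _, h _⟩, fun h i => ?_⟩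
  obtain ⟨hev, hodd⟩ := h ⟨i / 2, by omega⟩
  obtain hi | hi := Nat.mod_two_eq_zero_or_one i
  · convert hev using 2; ext; simp only; omega
  · convert hodd using 2; ext; simp only; omega

lemma sum_piFinset_prod_pairs {α R : Type*} [DecidableEq α] [CommSemiring R] {l : ℕ}
    (s : Finset α) (D : Fin l → α → α → R) :
    ∑ f ∈ Fintype.piFinset (fun _ : Fin (2 * l) => s),
        ∏ m, D m (finTwoMulArrowEquiv α l f m).1 (finTwoMulArrowEquiv α l f m).2 =
      ∏ m, ∑ x ∈ s, ∑ y ∈ s, D m x y := by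
  rw [sum_piFinset_finTwoMulArrowEquiv s fun g => ∏ m, D m (g m).1 (g m).2,
    ← prod_univ_sum (fun _ => s ×ˢ s) fun m p => D m p.1 p.2]
  simp only [sum_product]

lemma abs_sum_injective_prod_pairs_sub_le {α : Type*} [DecidableEq α] {l : ℕ}
    (s : Finset α) (D : Fin l → α → α → ℝ) (hD : ∀ m, ∀ x ∈ s, ∀ y ∈ s, |D m x y| ≤ 1) :
    |∑ f ∈ Fintype.piFinset (fun _ : Fin (2 * l) => s) with Function.Injective f,
        ∏ m, D m (finTwoMulArrowEquiv α l f m).1 (finTwoMulArrowEquiv α l f m).2 -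
      ∏ m, ∑ x ∈ s, ∑ y ∈ s, D m x y| ≤ (2 * l) ^ 2 * #s ^ (2 * l - 1) := by
  rw [← sum_piFinset_prod_pairs]
  refine (abs_sum_filter_injective_sub_sum_le s _ fun f hf => ?_).trans (by simp)
  rw [abs_prod]
  refine prod_le_one (fun _ _ => abs_nonneg _) fun m _ => hD m _ ?_ _ ?_ <;>
    simp only [finTwoMulArrowEquiv_apply] <;> exact Fintype.mem_piFinset.mp hf _

def zeroDiag {α R : Type*} [DecidableEq α] [Zero R] (c : α → α → R) (x y : α) : R :=
  if x = y then 0 else c x y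

lemma sum_sum_zeroDiag_eq_two_mul {α R : Type*} [LinearOrder α] [CommSemiring R] (s : Finset α)
    {c : α → α → R} (hc : ∀ x y, c x y = c y x) :
    ∑ x ∈ s, ∑ y ∈ s, zeroDiag c x y = 2 * ∑ x ∈ s, ∑ y ∈ s with x < y, c x y := by
  have hsplit : ∀ x y,
      zeroDiag c x y = (if x < y then c x y else 0) + if y < x then c x y else 0 := by
    intro x y
    rcases lt_trichotomy x y with h | rfl | h
    · simp [zeroDiag, h, h.ne, h.not_gt]
    · simp [zeroDiag]
    · simp [zeroDiag, h, h.ne', h.not_gt]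
  have hswap : ∑ x ∈ s, ∑ y ∈ s, (if y < x then c x y else 0) =
      ∑ x ∈ s, ∑ y ∈ s, if x < y then c x y else 0 := by
    rw [sum_comm]
    exact sum_congr rfl fun x _ => sum_congr rfl fun y _ => by rw [hc]
  simp only [hsplit, sum_add_distrib, hswap, sum_filter]
  ring

lemma sum_Icc_sum_Icc_zeroDiag_eq_two_mul {R : Type*} [CommSemiring R] (a k : ℕ)
    {c : ℕ → ℕ → R} (hc : ∀ x y, c x y = c y x) :
    ∑ x ∈ Icc a k, ∑ y ∈ Icc a k, zeroDiag c x y =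
      2 * ∑ i ∈ Icc a k, ∑ j ∈ Icc (i + 1) k, c i j := by
  rw [sum_sum_zeroDiag_eq_two_mul _ hc]
  congr 1
  exact sum_congr rfl fun i hi => by congr 1; ext j; simp at hi ⊢; omega

lemma abs_zeroDiag_le_one {α : Type*} [DecidableEq α] {s : Finset α} {c : α → α → ℝ}
    (hc : ∀ x ∈ s, ∀ y ∈ s, x ≠ y → c x y ∈ Set.Icc (-1) 1) {x y : α} (hx : x ∈ s) (hy : y ∈ s) :
    |zeroDiag c x y| ≤ 1 := by
  unfold zeroDiag
  split_ifs with h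
  · simp
  · exact abs_le.mpr (hc x hx y hy h)

lemma prod_attach_pairs_eq_prod_zeroDiag {α R : Type*} [DecidableEq α] [CommMonoidWithZero R]
    {l : ℕ} (t : Finset ℕ) (ht : ∀ m ∈ t, m < l) (c : α → α → R) {f : Fin (2 * l) → α}
    (hf : Function.Injective f) :
    ∏ m ∈ t.attach, c (f ⟨2 * m, by have := ht m m.2; omega⟩)
        (f ⟨2 * m + 1, by have := ht m m.2; omega⟩) =
      ∏ m ∈ univ.filter fun m : Fin l => (m : ℕ) ∈ t,
        zeroDiag c (finTwoMulArrowEquiv α l f m).1 (finTwoMulArrowEquiv α l f m).2 := by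
  refine prod_bij (fun m _ => ⟨m, ht m m.2⟩) (fun m _ => by simp) (fun m _ n _ h => ?_)
    (fun m hm => ⟨⟨m, (mem_filter.mp hm).2⟩, mem_attach _ _, rfl⟩) (fun m _ => ?_)
  · exact Subtype.ext (congrArg Fin.val h)
  · rw [finTwoMulArrowEquiv_apply, zeroDiag, if_neg (hf.ne (by simp))]

lemma sum_injective_prod_attach_range_eq {α R : Type*} [DecidableEq α] [CommSemiring R] {l : ℕ}
    (s : Finset α) (c : α → α → R) :
    ∑ f ∈ Fintype.piFinset (fun _ : Fin (2 * l) => s) with Function.Injective f,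
        ∏ m ∈ (range l).attach, c (f ⟨2 * m, by linarith [mem_range.mp m.2]⟩)
          (f ⟨2 * m + 1, by linarith [mem_range.mp m.2]⟩) =
      ∑ f ∈ Fintype.piFinset (fun _ : Fin (2 * l) => s) with Function.Injective f,
        ∏ m, zeroDiag c (finTwoMulArrowEquiv α l f m).1 (finTwoMulArrowEquiv α l f m).2 := by
  refine sum_congr rfl fun f hf => ?_
  rw [prod_attach_pairs_eq_prod_zeroDiag _ (fun m => mem_range.mp) c (mem_filter.mp hf).2,
    filter_true_of_mem fun m _ => mem_range.mpr m.2]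

def biasPairWeight {l : ℕ} (b : ℕ → ℝ) (c : ℕ → ℕ → ℝ) (m : Fin l) : ℕ → ℕ → ℝ :=
  if (m : ℕ) = 0 then fun x y => b x * c 1 y else zeroDiag c

lemma abs_biasPairWeight_le_one {l : ℕ} {s : Finset ℕ} {b : ℕ → ℝ} {c : ℕ → ℕ → ℝ}
    (hb : ∀ x ∈ s, |b x| ≤ 1) (hc₁ : ∀ y ∈ s, |c 1 y| ≤ 1)
    (hc : ∀ x ∈ s, ∀ y ∈ s, |zeroDiag c x y| ≤ 1) (m : Fin l) (x : ℕ) (hx : x ∈ s) (y : ℕ)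
    (hy : y ∈ s) :
    |biasPairWeight b c m x y| ≤ 1 := by
  unfold biasPairWeight
  split_ifs
  · rw [abs_mul]
    exact mul_le_one₀ (hb x hx) (abs_nonneg _) (hc₁ y hy)
  · exact hc x hx y hy

lemma sum_injective_mul_prod_attach_Icc_eq {l : ℕ} (hl : 1 ≤ l) (s : Finset ℕ) (b : ℕ → ℝ)
    (c : ℕ → ℕ → ℝ) :
    ∑ f ∈ Fintype.piFinset (fun _ : Fin (2 * l) => s) with Function.Injective f,
        b (f ⟨0, by linarith⟩) * c 1 (f ⟨1, by linarith⟩) *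
          ∏ m ∈ (Icc 1 (l - 1)).attach, c (f ⟨2 * m, by have := (mem_Icc.mp m.2).2; omega⟩)
            (f ⟨2 * m + 1, by have := (mem_Icc.mp m.2).2; omega⟩) =
      ∑ f ∈ Fintype.piFinset (fun _ : Fin (2 * l) => s) with Function.Injective f,
        ∏ m, biasPairWeight b c m (finTwoMulArrowEquiv ℕ l f m).1
          (finTwoMulArrowEquiv ℕ l f m).2 := by
  refine sum_congr rfl fun f hf => ?_
  have hIcc : ∀ m ∈ Icc 1 (l - 1), m < l := fun m hm => by have := mem_Icc.mp hm; omega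
  rw [prod_attach_pairs_eq_prod_zeroDiag _ hIcc c (mem_filter.mp hf).2,
    ← mul_prod_erase univ _ (mem_univ ⟨0, hl⟩)]
  congr 1
  refine prod_congr (by ext m; simp [Fin.ext_iff]; omega) fun m hm => ?_
  rw [biasPairWeight, if_neg fun h => (mem_erase.mp hm).1 (Fin.ext h)]

lemma prod_sum_sum_biasPairWeight {l : ℕ} (hl : 1 ≤ l) (s : Finset ℕ) (b : ℕ → ℝ)
    (c : ℕ → ℕ → ℝ) :
    ∏ m : Fin l, ∑ x ∈ s, ∑ y ∈ s, biasPairWeight b c m x y =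
      (∑ x ∈ s, b x) * (∑ y ∈ s, c 1 y) * (∑ x ∈ s, ∑ y ∈ s, zeroDiag c x y) ^ (l - 1) := by
  rw [← mul_prod_erase univ _ (mem_univ ⟨0, hl⟩), sum_mul_sum]
  congr 1
  rw [prod_congr rfl fun m hm => by
      rw [biasPairWeight, if_neg fun h => (mem_erase.mp hm).1 (Fin.ext h)],
    prod_const, card_erase_of_mem (mem_univ _), card_univ, Fintype.card_fin]

lemma abs_mul_inv_two_pow_mul_sum_injective_sub_le {α : Type*} [DecidableEq α] {l k : ℕ}
    {s : Finset α} (hs : #s ≤ k) (D : Fin l → α → α → ℝ)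
    (hD : ∀ m, ∀ x ∈ s, ∀ y ∈ s, |D m x y| ≤ 1) {a : ℝ} (ha : |a| ≤ l) (j : ℕ) :
    |a * (2 ^ j)⁻¹ * (∑ f ∈ Fintype.piFinset (fun _ : Fin (2 * l) => s) with Function.Injective f,
        ∏ m, D m (finTwoMulArrowEquiv α l f m).1 (finTwoMulArrowEquiv α l f m).2 -
      ∏ m, ∑ x ∈ s, ∑ y ∈ s, D m x y)| ≤ 4 * l ^ 3 * k ^ (2 * l - 1) := by
  have hpow : ((2 : ℝ) ^ j)⁻¹ ≤ 1 := inv_le_one_of_one_le₀ (one_le_pow₀ one_le_two)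
  rw [abs_mul, abs_mul, abs_inv, abs_pow, abs_two]
  calc _ ≤ (l : ℝ) * 1 * ((2 * l) ^ 2 * k ^ (2 * l - 1)) := by
        gcongr
        refine (abs_sum_injective_prod_pairs_sub_le s D hD).trans ?_
        gcongr
    _ = 4 * l ^ 3 * k ^ (2 * l - 1) := by ring

/-- Fix `l ≥ 1`. There is `C > 0` (depending only on `l`) such that for every
`k ≥ 2` and all biases `b_i ∈ [−1,1]` (`1 ≤ i ≤ k`) and symmetric pairwise
biases `c i j ∈ [−1,1]` (`i ≠ j` in `{1,…,k}`), both
`|l!·S₂ − b₁·M^l| ≤ C·k^{2l−1}` and `|l!·S₃ − l·β·T₃·M^{l−1}| ≤ C·k^{2l−1}`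
hold, where `β = Σ_{i=2}^k b_i`, `M = Σ_{2≤i<j≤k} c_{ij}`, `T₃ = Σ_{i=2}^k c_{1i}`,
`S₂` is `b₁` times the sum over all sets of `l` pairwise-disjoint unordered
pairs from `{2,…,k}` (each counted once) of the products of `c` over the pairs,
and `S₃` sums `b_{j₀}·c_{1 j₁}·(product over `l−1` disjoint pairs)` over all
choices of distinct `j₀, j₁ ∈ {2,…,k}` and `l−1` pairwise-disjoint unordered
pairs from `{2,…,k}∖{j₀,j₁}` (each configuration counted once); both `S₂` and
`S₃` are realized as sums over injective tuples divided by the symmetry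
factors `l!·2^l` and `(l−1)!·2^{l−1}` respectively. -/
theorem stmt_18 (l : ℕ) (hl : 1 ≤ l) :
    ∃ C : ℝ, 0 < C ∧ ∀ k : ℕ, 2 ≤ k → ∀ b : ℕ → ℝ, ∀ c : ℕ → ℕ → ℝ,
      (∀ i ∈ Finset.Icc 1 k, b i ∈ Set.Icc (-1 : ℝ) 1) →
      (∀ i j, c i j = c j i) →
      (∀ i ∈ Finset.Icc 1 k, ∀ j ∈ Finset.Icc 1 k, i ≠ j → c i j ∈ Set.Icc (-1 : ℝ) 1) →
      ∀ β M T₃ S₂ S₃ : ℝ,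
        β = ∑ i ∈ Finset.Icc 2 k, b i →
        M = ∑ i ∈ Finset.Icc 2 k, ∑ j ∈ Finset.Icc (i + 1) k, c i j →
        T₃ = ∑ i ∈ Finset.Icc 2 k, c 1 i →
        S₂ = b 1 * (((l.factorial : ℝ) * 2 ^ l)⁻¹ *
          ∑ f ∈ (Fintype.piFinset fun _ : Fin (2 * l) => Finset.Icc 2 k).filter
              (fun f => Function.Injective f),
            ∏ m ∈ (Finset.range l).attach,
              c (f ⟨2 * (m : ℕ), by have := Finset.mem_range.mp m.2; omega⟩)
                (f ⟨2 * (m : ℕ) + 1, by have := Finset.mem_range.mp m.2; omega⟩)) →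
        S₃ = (((l - 1).factorial : ℝ) * 2 ^ (l - 1))⁻¹ *
          ∑ f ∈ (Fintype.piFinset fun _ : Fin (2 * l) => Finset.Icc 2 k).filter
              (fun f => Function.Injective f),
            b (f ⟨0, by omega⟩) * c 1 (f ⟨1, by omega⟩) *
              ∏ m ∈ (Finset.Icc 1 (l - 1)).attach,
                c (f ⟨2 * (m : ℕ), by have := Finset.mem_Icc.mp m.2; omega⟩)
                  (f ⟨2 * (m : ℕ) + 1, by have := Finset.mem_Icc.mp m.2; omega⟩) →
        |(l.factorial : ℝ) * S₂ - b 1 * M ^ l| ≤ C * k ^ (2 * l - 1) ∧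
        |(l.factorial : ℝ) * S₃ - l * β * T₃ * M ^ (l - 1)| ≤ C * k ^ (2 * l - 1) := by
  refine ⟨4 * l ^ 3, by positivity, fun k _ b c hb hc_symm hc β M T₃ S₂ S₃ hβ hM hT₃ hS₂ hS₃ => ?_⟩
  have hs : #(Icc 2 k) ≤ k := by simp
  have hsub : ∀ x ∈ Icc 2 k, x ∈ Icc 1 k := fun x hx => by simp at hx ⊢; omega
  have hb' : ∀ x ∈ Icc 1 k, |b x| ≤ 1 := fun x hx => abs_le.mpr (hb x hx)
  have hcD : ∀ x ∈ Icc 2 k, ∀ y ∈ Icc 2 k, |zeroDiag c x y| ≤ 1 :=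
    fun x hx y hy => abs_zeroDiag_le_one hc (hsub x hx) (hsub y hy)
  have hM2 : ∑ x ∈ Icc 2 k, ∑ y ∈ Icc 2 k, zeroDiag c x y = 2 * M :=
    hM ▸ sum_Icc_sum_Icc_zeroDiag_eq_two_mul 2 k hc_symm
  constructor
  · have key := abs_mul_inv_two_pow_mul_sum_injective_sub_le hs _ (fun _ => hcD)
      ((hb' 1 (by simp; omega)).trans (by exact_mod_cast hl)) l
    rw [prod_const, hM2, card_univ, Fintype.card_fin] at key
    convert key using 2
    rw [hS₂, sum_injective_prod_attach_range_eq]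
    field_simp
    ring
  · have hc₁ : ∀ y ∈ Icc 2 k, |c 1 y| ≤ 1 := fun y hy =>
      abs_le.mpr (hc 1 (by simp; omega) y (hsub y hy) (by simp at hy; omega))
    have key := abs_mul_inv_two_pow_mul_sum_injective_sub_le (l := l) hs (biasPairWeight b c)
      (abs_biasPairWeight_le_one (fun x hx => hb' x (hsub x hx)) hc₁ hcD)
      (a := l) (by simp) (l - 1)
    rw [prod_sum_sum_biasPairWeight hl, hM2, ← hβ, ← hT₃] at key
    convert key using 2
    rw [hS₃, sum_injective_mul_prod_attach_Icc_eq hl, ← Nat.mul_factorial_pred (by omega)]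
    push_cast
    field_simp
    ring
end
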